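/- arXiv:2308.12404 — 9 statements merged into one kernel-verified Lean document; each statement's English description precedes it below -/
import Mathlib

section
/- Let G = (V,A) be a finite directed graph that is Eulerian, i.e., ∂({v}) = 0 for every vertex v ∈ V, let b : 2^V → ℝ be submodular, assume A is nonempty and that at least one submodular flow exists. Then σ* = max( 0 , max{ −b(X)/δ(X) : X ⊆ V, δ(X) > 0 } ), where the inner maximum is taken to be 0 if there is no X with δ(X) > 0. -/
open Finset

def inEdges {V A : Type*} [Fintype A] [DecidableEq V] (t hd : A → V) (X : Finset V) : Finset A :=
  univ.filter fun e => t e ∉ X ∧ hd e ∈ X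

def outEdges {V A : Type*} [Fintype A] [DecidableEq V] (t hd : A → V) (X : Finset V) : Finset A :=
  univ.filter fun e => t e ∈ X ∧ hd e ∉ X

def rhoF {V A : Type*} [Fintype A] [DecidableEq V] (t hd : A → V) (x : A → ℝ) (X : Finset V) : ℝ :=
  ∑ e ∈ inEdges t hd X, x e

def deltaF {V A : Type*} [Fintype A] [DecidableEq V] (t hd : A → V) (x : A → ℝ) (X : Finset V) : ℝ :=
  ∑ e ∈ outEdges t hd X, x e

def rhoC {V A : Type*} [Fintype A] [DecidableEq V] (t hd : A → V) (X : Finset V) : ℕ :=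
  (inEdges t hd X).card

def deltaC {V A : Type*} [Fintype A] [DecidableEq V] (t hd : A → V) (X : Finset V) : ℕ :=
  (outEdges t hd X).card

def partC {V A : Type*} [Fintype A] [DecidableEq V] (t hd : A → V) (X : Finset V) : ℝ :=
  (rhoC t hd X : ℝ) - (deltaC t hd X : ℝ)

def Submodular {V : Type*} [DecidableEq V] (b : Finset V → ℝ) : Prop :=
  ∀ X Y : Finset V, b (X ∪ Y) + b (X ∩ Y) ≤ b X + b Y

def IsSubmodularFlow {V A : Type*} [Fintype A] [DecidableEq V] (t hd : A → V)
    (b : Finset V → ℝ) (x : A → ℝ) : Prop :=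
  ∀ X : Finset V, rhoF t hd x X - deltaF t hd x X ≤ b X

noncomputable def spread {A : Type*} [Fintype A] [Nonempty A] (x : A → ℝ) : ℝ :=
  univ.sup' univ_nonempty x - univ.inf' univ_nonempty x

noncomputable def sigmaStar {V A : Type*} [Fintype A] [DecidableEq V] [Nonempty A]
    (t hd : A → V) (b : Finset V → ℝ) : ℝ :=
  sInf {s : ℝ | ∃ x : A → ℝ, IsSubmodularFlow t hd b x ∧ spread x = s}

set_option linter.unusedSectionVars false

section AuxDefs

variable {V A : Type*} [Fintype A] [DecidableEq V] (t hd : A → V)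

/-- The coefficient of edge `e` in the netflow into `X`. -/
def coef (X : Finset V) (e : A) : ℝ :=
  (if hd e ∈ X then 1 else 0) - (if t e ∈ X then 1 else 0)

lemma netflow_eq (x : A → ℝ) (X : Finset V) :
    rhoF t hd x X - deltaF t hd x X = ∑ e, x e * coef t hd X e := by
  unfold rhoF deltaF inEdges outEdges
  rw [Finset.sum_filter, Finset.sum_filter, ← Finset.sum_sub_distrib]
  refine Finset.sum_congr rfl fun e _ => ?_
  unfold coef
  by_cases h1 : t e ∈ X <;> by_cases h2 : hd e ∈ X <;> simp [h1, h2]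

lemma deltaC_real (X : Finset V) :
    (deltaC t hd X : ℝ) = ∑ e, (if t e ∈ X ∧ hd e ∉ X then (1:ℝ) else 0) := by
  unfold deltaC outEdges
  rw [Finset.card_filter]
  push_cast
  rfl

lemma rhoC_real (X : Finset V) :
    (rhoC t hd X : ℝ) = ∑ e, (if t e ∉ X ∧ hd e ∈ X then (1:ℝ) else 0) := by
  unfold rhoC inEdges
  rw [Finset.card_filter]
  push_cast
  rfl

lemma count_eq (X : Finset V) :
    (rhoC t hd X : ℝ) - (deltaC t hd X : ℝ) = ∑ e, coef t hd X e := by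
  rw [rhoC_real, deltaC_real, ← Finset.sum_sub_distrib]
  refine Finset.sum_congr rfl fun e _ => ?_
  unfold coef
  by_cases h1 : t e ∈ X <;> by_cases h2 : hd e ∈ X <;> simp [h1, h2]

lemma coef_eq (X : Finset V) (e : A) :
    coef t hd X e = (if hd e ∈ X ∧ t e ∉ X then (1:ℝ) else 0)
      - (if t e ∈ X ∧ hd e ∉ X then (1:ℝ) else 0) := by
  unfold coef
  by_cases h1 : t e ∈ X <;> by_cases h2 : hd e ∈ X <;> simp [h1, h2]

lemma euler_global [Fintype V] (hE : ∀ v : V, rhoC t hd {v} = deltaC t hd {v})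
    (X : Finset V) : (rhoC t hd X : ℝ) = (deltaC t hd X : ℝ) := by
  have hcoef : ∀ e, coef t hd X e = ∑ v ∈ X, coef t hd {v} e := by
    intro e
    unfold coef
    rw [Finset.sum_sub_distrib]
    congr 1
    · simp only [Finset.mem_singleton]
      rw [Finset.sum_ite_eq X (hd e) (fun _ => (1:ℝ))]
    · simp only [Finset.mem_singleton]
      rw [Finset.sum_ite_eq X (t e) (fun _ => (1:ℝ))]
  have key : ∑ e, coef t hd X e = 0 := by
    rw [Finset.sum_congr rfl fun e _ => hcoef e, Finset.sum_comm]
    refine Finset.sum_eq_zero fun v _ => ?_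
    rw [← count_eq, hE v]
    ring
  have := count_eq t hd X
  rw [key] at this
  linarith

end AuxDefs
section Uncross

variable {V : Type*} [Fintype V] [DecidableEq V]

lemma uncross_sum (y : Finset V → ℝ) (α : ℝ) (X0 Y0 : Finset V) (c : Finset V → ℝ) :
    ∑ Z : Finset V, (y Z + α * ((if Z = X0 ∪ Y0 then (1:ℝ) else 0) + (if Z = X0 ∩ Y0 then 1 else 0)
        - (if Z = X0 then 1 else 0) - (if Z = Y0 then 1 else 0))) * c Z
      = (∑ Z : Finset V, y Z * c Z) + α * (c (X0 ∪ Y0) + c (X0 ∩ Y0) - c X0 - c Y0) := by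
  have h : ∀ W : Finset V, ∑ Z : Finset V, (if Z = W then (1:ℝ) else 0) * c Z = c W := by
    intro W
    have h0 : ∀ Z : Finset V, (if Z = W then (1:ℝ) else 0) * c Z = if Z = W then c Z else 0 := by
      intro Z; split <;> simp
    rw [Finset.sum_congr rfl fun Z _ => h0 Z, Finset.sum_ite_eq' Finset.univ W c,
      if_pos (Finset.mem_univ W)]
  have expand : ∀ Z : Finset V, (y Z + α * ((if Z = X0 ∪ Y0 then (1:ℝ) else 0) + (if Z = X0 ∩ Y0 then 1 else 0)
        - (if Z = X0 then 1 else 0) - (if Z = Y0 then 1 else 0))) * c Z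
      = y Z * c Z + α * ((if Z = X0 ∪ Y0 then (1:ℝ) else 0) * c Z) + α * ((if Z = X0 ∩ Y0 then (1:ℝ) else 0) * c Z)
        - α * ((if Z = X0 then (1:ℝ) else 0) * c Z) - α * ((if Z = Y0 then (1:ℝ) else 0) * c Z) := by
    intro Z; ring
  rw [Finset.sum_congr rfl fun Z _ => expand Z]
  rw [Finset.sum_sub_distrib, Finset.sum_sub_distrib, Finset.sum_add_distrib, Finset.sum_add_distrib,
    ← Finset.mul_sum, ← Finset.mul_sum, ← Finset.mul_sum, ← Finset.mul_sum, h, h, h, h]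
  ring

lemma uncross (b : Finset V → ℝ) (hb : Submodular b) (y : Finset V → ℝ) (hy : ∀ Y, 0 ≤ y Y) :
    ∃ y' : Finset V → ℝ, (∀ Y, 0 ≤ y' Y) ∧
      (∀ v : V, (∑ Y : Finset V, y' Y * (if v ∈ Y then (1:ℝ) else 0))
          = ∑ Y : Finset V, y Y * (if v ∈ Y then (1:ℝ) else 0)) ∧
      (∑ Y : Finset V, y' Y * b Y ≤ ∑ Y : Finset V, y Y * b Y) ∧
      (∀ X Y : Finset V, y' X ≠ 0 → y' Y ≠ 0 → X ⊆ Y ∨ Y ⊆ X) := by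
  classical
  set M : ℝ := ∑ Y : Finset V, y Y with hM
  set K : Set (Finset V → ℝ) := {z | (∀ Y, 0 ≤ z Y) ∧
      (∀ v : V, (∑ Y : Finset V, z Y * (if v ∈ Y then (1:ℝ) else 0))
          = ∑ Y : Finset V, y Y * (if v ∈ Y then (1:ℝ) else 0)) ∧
      (∑ Y : Finset V, z Y * b Y ≤ ∑ Y : Finset V, y Y * b Y) ∧
      (∑ Y : Finset V, z Y = M)} with hK
  have hcont : ∀ c : Finset V → ℝ, Continuous (fun z : Finset V → ℝ => ∑ Y : Finset V, z Y * c Y) :=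
    fun c => continuous_finset_sum _ fun Y _ => (continuous_apply Y).mul continuous_const
  have hKclosed : IsClosed K := by
    have h1 : IsClosed {z : Finset V → ℝ | ∀ Y, 0 ≤ z Y} := by
      have : {z : Finset V → ℝ | ∀ Y, 0 ≤ z Y} = ⋂ Y, {z | 0 ≤ z Y} := by
        ext z; simp [Set.mem_iInter]
      rw [this]
      exact isClosed_iInter fun Y => isClosed_le continuous_const (continuous_apply Y)
    have h2 : IsClosed {z : Finset V → ℝ | ∀ v : V, (∑ Y : Finset V, z Y * (if v ∈ Y then (1:ℝ) else 0))
          = ∑ Y : Finset V, y Y * (if v ∈ Y then (1:ℝ) else 0)} := by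
      have : {z : Finset V → ℝ | ∀ v : V, (∑ Y : Finset V, z Y * (if v ∈ Y then (1:ℝ) else 0))
          = ∑ Y : Finset V, y Y * (if v ∈ Y then (1:ℝ) else 0)} = ⋂ v, {z | (∑ Y : Finset V, z Y * (if v ∈ Y then (1:ℝ) else 0))
          = ∑ Y : Finset V, y Y * (if v ∈ Y then (1:ℝ) else 0)} := by
        ext z; simp [Set.mem_iInter]
      rw [this]
      exact isClosed_iInter fun v => isClosed_eq (hcont _) continuous_const
    have h3 : IsClosed {z : Finset V → ℝ | ∑ Y : Finset V, z Y * b Y ≤ ∑ Y : Finset V, y Y * b Y} :=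
      isClosed_le (hcont _) continuous_const
    have h4 : IsClosed {z : Finset V → ℝ | ∑ Y : Finset V, z Y = M} := by
      refine isClosed_eq ?_ continuous_const
      have := hcont (fun _ => (1:ℝ))
      simpa using this
    have : K = {z : Finset V → ℝ | ∀ Y, 0 ≤ z Y} ∩ ({z | ∀ v : V, (∑ Y : Finset V, z Y * (if v ∈ Y then (1:ℝ) else 0))
          = ∑ Y : Finset V, y Y * (if v ∈ Y then (1:ℝ) else 0)} ∩ ({z | ∑ Y : Finset V, z Y * b Y ≤ ∑ Y : Finset V, y Y * b Y} ∩ {z | ∑ Y : Finset V, z Y = M})) := by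
      ext z; simp only [hK, Set.mem_setOf_eq, Set.mem_inter_iff, and_assoc]
    rw [this]
    exact h1.inter (h2.inter (h3.inter h4))
  have hKsub : K ⊆ Set.pi Set.univ (fun _ : Finset V => Set.Icc (0:ℝ) M) := by
    intro z hz Y _
    refine ⟨hz.1 Y, ?_⟩
    rw [← hz.2.2.2]
    exact Finset.single_le_sum (fun Z _ => hz.1 Z) (Finset.mem_univ Y)
  have hKcpt : IsCompact K :=
    (isCompact_univ_pi fun _ => isCompact_Icc).of_isClosed_subset hKclosed hKsub
  have hKne : K.Nonempty := ⟨y, hy, fun _ => rfl, le_refl _, rfl⟩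
  obtain ⟨y', hy'K, hmax⟩ := hKcpt.exists_isMaxOn hKne
    (Continuous.continuousOn (hcont fun Y => ((Y.card : ℝ))^2))
  refine ⟨y', hy'K.1, hy'K.2.1, hy'K.2.2.1, ?_⟩
  by_contra hchain
  push_neg at hchain
  obtain ⟨X0, Y0, hX0, hY0, hXY, hYX⟩ := hchain
  have hX0pos : 0 < y' X0 := lt_of_le_of_ne (hy'K.1 X0) (Ne.symm hX0)
  have hY0pos : 0 < y' Y0 := lt_of_le_of_ne (hy'K.1 Y0) (Ne.symm hY0)
  set α : ℝ := min (y' X0) (y' Y0) with hα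
  have hαpos : 0 < α := lt_min hX0pos hY0pos
  have d1 : X0 ≠ Y0 := fun h => hXY (h ▸ subset_refl X0)
  have d2 : X0 ≠ X0 ∪ Y0 := fun h => hYX (h ▸ Finset.subset_union_right)
  have d3 : Y0 ≠ X0 ∪ Y0 := fun h => hXY (h ▸ Finset.subset_union_left)
  have d4 : X0 ∩ Y0 ≠ X0 := fun h => hXY (h ▸ Finset.inter_subset_right)
  have d5 : X0 ∩ Y0 ≠ Y0 := fun h => hYX (h ▸ Finset.inter_subset_left)
  set z : Finset V → ℝ := fun Z => y' Z + α * ((if Z = X0 ∪ Y0 then (1:ℝ) else 0) + (if Z = X0 ∩ Y0 then 1 else 0)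
        - (if Z = X0 then 1 else 0) - (if Z = Y0 then 1 else 0)) with hz
  have hzK : z ∈ K := by
    refine ⟨?_, ?_, ?_, ?_⟩
    · intro Z
      by_cases e1 : Z = X0
      · rw [e1]
        simp only [hz, if_neg d2, if_neg (Ne.symm d4), if_pos rfl, if_neg d1, if_true]
        have : α ≤ y' X0 := min_le_left _ _
        linarith
      by_cases e2 : Z = Y0
      · rw [e2]
        simp only [hz, if_neg d3, if_neg (Ne.symm d5), if_neg (Ne.symm d1), if_pos rfl, if_true]
        have : α ≤ y' Y0 := min_le_right _ _
        linarith
      · have hz1 : (0:ℝ) ≤ (if Z = X0 ∪ Y0 then (1:ℝ) else 0) := by positivity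
        have hz2 : (0:ℝ) ≤ (if Z = X0 ∩ Y0 then (1:ℝ) else 0) := by positivity
        simp only [hz, if_neg e1, if_neg e2]
        have := hy'K.1 Z
        nlinarith
    · intro v
      simp only [hz]
      rw [uncross_sum y' α X0 Y0 (fun Y => if v ∈ Y then (1:ℝ) else 0)]
      have hind : (if v ∈ X0 ∪ Y0 then (1:ℝ) else 0) + (if v ∈ X0 ∩ Y0 then 1 else 0)
          - (if v ∈ X0 then 1 else 0) - (if v ∈ Y0 then 1 else 0) = 0 := by
        by_cases h1 : v ∈ X0 <;> by_cases h2 : v ∈ Y0 <;>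
          simp [Finset.mem_union, Finset.mem_inter, h1, h2]
      have h1 := hy'K.2.1 v
      linear_combination h1 + α * hind
    · simp only [hz]
      rw [uncross_sum y' α X0 Y0 b]
      have hsub : α * (b (X0 ∪ Y0) + b (X0 ∩ Y0) - b X0 - b Y0) ≤ 0 :=
        mul_nonpos_of_nonneg_of_nonpos hαpos.le (by have := hb X0 Y0; linarith)
      have := hy'K.2.2.1
      linarith
    · simp only [hz]
      have h1 := uncross_sum y' α X0 Y0 (fun _ => (1:ℝ))
      simp only [mul_one] at h1
      rw [h1]
      have h2 := hy'K.2.2.2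
      linear_combination h2
  have hΦ : (∑ Z : Finset V, z Z * ((Z.card : ℝ))^2) ≤ ∑ Y : Finset V, y' Y * ((Y.card : ℝ))^2 :=
    hmax hzK
  have hkey : (∑ Z : Finset V, z Z * ((Z.card : ℝ))^2)
      = (∑ Y : Finset V, y' Y * ((Y.card : ℝ))^2)
        + α * (((X0 ∪ Y0).card : ℝ)^2 + ((X0 ∩ Y0).card : ℝ)^2 - (X0.card : ℝ)^2 - (Y0.card : ℝ)^2) := by
    simp only [hz]
    exact uncross_sum y' α X0 Y0 (fun Y => ((Y.card : ℝ))^2)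
  have hcards : ((X0 ∪ Y0).card : ℝ) + ((X0 ∩ Y0).card : ℝ) = (X0.card : ℝ) + (Y0.card : ℝ) := by
    have := Finset.card_union_add_card_inter X0 Y0
    exact_mod_cast this
  have hlt1 : (X0.card : ℝ) < ((X0 ∪ Y0).card : ℝ) := by
    have : X0 ⊂ X0 ∪ Y0 := Finset.ssubset_iff_subset_ne.2 ⟨Finset.subset_union_left, d2⟩
    exact_mod_cast Finset.card_lt_card this
  have hlt2 : (Y0.card : ℝ) < ((X0 ∪ Y0).card : ℝ) := by
    have : Y0 ⊂ X0 ∪ Y0 := Finset.ssubset_iff_subset_ne.2 ⟨Finset.subset_union_right, d3⟩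
    exact_mod_cast Finset.card_lt_card this
  have hbr : 0 < ((X0 ∪ Y0).card : ℝ)^2 + ((X0 ∩ Y0).card : ℝ)^2 - (X0.card : ℝ)^2 - (Y0.card : ℝ)^2 := by
    nlinarith [mul_pos (sub_pos.2 hlt1) (sub_pos.2 hlt2)]
  nlinarith [mul_pos hαpos hbr]

end Uncross
section Construct

variable {V A : Type*} [Fintype V] [Fintype A] [DecidableEq V]

lemma sq_max_le (u w : ℝ) : (max (u + w) 0)^2 ≤ (max u 0)^2 + 2*(max u 0)*w + w^2 := by
  have h0 : (max u 0 + w)^2 = (max u 0)^2 + 2*(max u 0)*w + w^2 := by ring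
  rw [← h0]
  rcases le_total (u + w) 0 with h | h
  · rw [max_eq_right h]
    simpa using sq_nonneg (max u 0 + w)
  · rw [max_eq_left h]
    have h1 : u + w ≤ max u 0 + w := by have := le_max_left u 0; linarith
    have h2 : 0 ≤ u + w := h
    nlinarith

lemma sum_update_mul [DecidableEq A] (x : A → ℝ) (e0 : A) (a : ℝ) (c : A → ℝ) :
    ∑ e, Function.update x e0 a e * c e = (∑ e, x e * c e) + (a - x e0) * c e0 := by
  classical
  have h : ∀ e, Function.update x e0 a e * c e
      = x e * c e + (if e = e0 then (a - x e0) * c e0 else 0) := by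
    intro e
    by_cases he : e = e0
    · subst he; simp [Function.update_self]; ring
    · simp [Function.update_of_ne he, he]
  rw [Finset.sum_congr rfl fun e _ => h e, Finset.sum_add_distrib,
    Finset.sum_ite_eq' Finset.univ e0 (fun _ => (a - x e0) * c e0), if_pos (Finset.mem_univ e0)]

lemma exists_box_flow (t hd : A → V) (b : Finset V → ℝ) (hb : Submodular b)
    (s : ℝ) (hs : 0 ≤ s)
    (hsb : ∀ X : Finset V, 0 ≤ b X + s * (deltaC t hd X : ℝ)) :
    ∃ x : A → ℝ, (∀ e, 0 ≤ x e ∧ x e ≤ s) ∧ IsSubmodularFlow t hd b x := by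
  classical
  -- the excess function
  set ex : (A → ℝ) → Finset V → ℝ := fun x X => (∑ e, x e * coef t hd X e) - b X with hex
  set F : (A → ℝ) → ℝ := fun x => ∑ X : Finset V, (max (ex x X) 0)^2 with hF
  have hFcont : Continuous F := by
    refine continuous_finset_sum _ fun X _ => ?_
    have h1 : Continuous fun x : A → ℝ => ex x X :=
      (continuous_finset_sum _ fun e _ => (continuous_apply e).mul continuous_const).sub
        continuous_const
    exact (h1.max continuous_const).pow 2
  set Kb : Set (A → ℝ) := Set.pi Set.univ (fun _ : A => Set.Icc (0:ℝ) s) with hKb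
  have hKbcpt : IsCompact Kb := isCompact_univ_pi fun _ => isCompact_Icc
  have hKbne : Kb.Nonempty := ⟨fun _ => 0, fun e _ => ⟨le_refl 0, hs⟩⟩
  obtain ⟨x0, hx0K, hmin⟩ := hKbcpt.exists_isMinOn hKbne hFcont.continuousOn
  have hbox : ∀ e, 0 ≤ x0 e ∧ x0 e ≤ s := fun e => hx0K e (Set.mem_univ e)
  set y : Finset V → ℝ := fun X => max (ex x0 X) 0 with hy
  have hynn : ∀ X, 0 ≤ y X := fun X => le_max_right _ _
  set g : A → ℝ := fun e => ∑ X : Finset V, y X * coef t hd X e with hg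
  -- perturbation estimate
  have hpert : ∀ (e0 : A) (ε : ℝ), F (Function.update x0 e0 (x0 e0 + ε))
      ≤ F x0 + 2 * ε * g e0 + ε^2 * ∑ X : Finset V, (coef t hd X e0)^2 := by
    intro e0 ε
    have hexeq : ∀ X, ex (Function.update x0 e0 (x0 e0 + ε)) X = ex x0 X + ε * coef t hd X e0 := by
      intro X
      simp only [hex]
      rw [sum_update_mul x0 e0 (x0 e0 + ε) (fun e => coef t hd X e)]
      ring
    have hterm : ∀ X, (max (ex (Function.update x0 e0 (x0 e0 + ε)) X) 0)^2
        ≤ (y X)^2 + 2 * (y X) * (ε * coef t hd X e0) + (ε * coef t hd X e0)^2 := by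
      intro X
      rw [hexeq X]
      exact sq_max_le (ex x0 X) (ε * coef t hd X e0)
    calc F (Function.update x0 e0 (x0 e0 + ε))
        ≤ ∑ X : Finset V, ((y X)^2 + 2 * (y X) * (ε * coef t hd X e0) + (ε * coef t hd X e0)^2) :=
          Finset.sum_le_sum fun X _ => hterm X
      _ = F x0 + 2 * ε * g e0 + ε^2 * ∑ X : Finset V, (coef t hd X e0)^2 := by
          simp only [hF, hy, hg, Finset.mul_sum, ← Finset.sum_add_distrib]
          exact Finset.sum_congr rfl fun X _ => by ring
  -- KKT conditions
  have kkt1 : ∀ e0, 0 < g e0 → x0 e0 = 0 := by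
    intro e0 hge
    by_contra hne
    have hxpos : 0 < x0 e0 := lt_of_le_of_ne (hbox e0).1 (Ne.symm hne)
    set C : ℝ := ∑ X : Finset V, (coef t hd X e0)^2 with hC
    have hCnn : 0 ≤ C := Finset.sum_nonneg fun X _ => sq_nonneg _
    set ε : ℝ := min (x0 e0) (g e0 / (C + 1)) with hε
    have hεpos : 0 < ε := lt_min hxpos (div_pos hge (by linarith))
    have hεle : ε ≤ x0 e0 := min_le_left _ _
    have hεC : ε * C < g e0 := by
      have h1 : ε ≤ g e0 / (C + 1) := min_le_right _ _
      have h2 : ε * C ≤ (g e0 / (C + 1)) * C := mul_le_mul_of_nonneg_right h1 hCnn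
      have h3 : (g e0 / (C + 1)) * C < g e0 := by
        rw [div_mul_eq_mul_div, div_lt_iff₀ (by linarith : (0:ℝ) < C + 1)]
        nlinarith
      linarith
    have hmem : Function.update x0 e0 (x0 e0 + (-ε)) ∈ Kb := by
      intro e _
      by_cases he : e = e0
      · subst he
        rw [Function.update_self]
        exact ⟨by linarith, by have := (hbox e).2; linarith⟩
      · rw [Function.update_of_ne he]
        exact ⟨(hbox e).1, (hbox e).2⟩
    have hFlt : F (Function.update x0 e0 (x0 e0 + (-ε))) < F x0 := by
      have := hpert e0 (-ε)
      have hq : 2 * (-ε) * g e0 + (-ε)^2 * C < 0 := by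
        have : (-ε)^2 * C = ε * (ε * C) := by ring
        rw [this]
        have h4 : ε * (ε * C) ≤ ε * g e0 := mul_le_mul_of_nonneg_left hεC.le hεpos.le
        nlinarith
      calc F (Function.update x0 e0 (x0 e0 + (-ε)))
          ≤ F x0 + 2 * (-ε) * g e0 + (-ε)^2 * C := hpert e0 (-ε)
        _ < F x0 := by linarith
    exact absurd (hmin hmem) (not_le.2 hFlt)
  have kkt2 : ∀ e0, g e0 < 0 → x0 e0 = s := by
    intro e0 hge
    by_contra hne
    have hxlt : x0 e0 < s := lt_of_le_of_ne (hbox e0).2 hne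
    set C : ℝ := ∑ X : Finset V, (coef t hd X e0)^2 with hC
    have hCnn : 0 ≤ C := Finset.sum_nonneg fun X _ => sq_nonneg _
    set ε : ℝ := min (s - x0 e0) ((-g e0) / (C + 1)) with hε
    have hεpos : 0 < ε := lt_min (by linarith) (div_pos (by linarith) (by linarith))
    have hεle : ε ≤ s - x0 e0 := min_le_left _ _
    have hεC : ε * C < -g e0 := by
      have h1 : ε ≤ (-g e0) / (C + 1) := min_le_right _ _
      have h2 : ε * C ≤ ((-g e0) / (C + 1)) * C := mul_le_mul_of_nonneg_right h1 hCnn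
      have h3 : ((-g e0) / (C + 1)) * C < -g e0 := by
        rw [div_mul_eq_mul_div, div_lt_iff₀ (by linarith : (0:ℝ) < C + 1)]
        nlinarith
      linarith
    have hmem : Function.update x0 e0 (x0 e0 + ε) ∈ Kb := by
      intro e _
      by_cases he : e = e0
      · subst he
        rw [Function.update_self]
        exact ⟨by have := (hbox e).1; linarith, by linarith⟩
      · rw [Function.update_of_ne he]
        exact ⟨(hbox e).1, (hbox e).2⟩
    have hFlt : F (Function.update x0 e0 (x0 e0 + ε)) < F x0 := by
      have hq : 2 * ε * g e0 + ε^2 * C < 0 := by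
        have h5 : ε^2 * C = ε * (ε * C) := by ring
        rw [h5]
        have h4 : ε * (ε * C) ≤ ε * (-g e0) := mul_le_mul_of_nonneg_left hεC.le hεpos.le
        nlinarith
      calc F (Function.update x0 e0 (x0 e0 + ε))
          ≤ F x0 + 2 * ε * g e0 + ε^2 * C := hpert e0 ε
        _ < F x0 := by linarith
    exact absurd (hmin hmem) (not_le.2 hFlt)
  -- pointwise KKT identity
  have hpoint : ∀ e, x0 e * g e = s * min (g e) 0 := by
    intro e
    rcases lt_trichotomy (g e) 0 with h | h | h
    · rw [kkt2 e h, min_eq_left h.le]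
    · rw [h, mul_zero, min_self, mul_zero]
    · rw [kkt1 e h, min_eq_right h.le, mul_zero, zero_mul]
  -- x0 is a submodular flow
  refine ⟨x0, hbox, ?_⟩
  by_contra hviol
  unfold IsSubmodularFlow at hviol
  push_neg at hviol
  obtain ⟨X0, hX0⟩ := hviol
  have hexX0 : 0 < ex x0 X0 := by
    have := netflow_eq t hd x0 X0
    simp only [hex]
    linarith
  -- P > 0
  have hP : 0 < ∑ X : Finset V, y X * ex x0 X := by
    refine Finset.sum_pos' (fun X _ => ?_) ⟨X0, Finset.mem_univ X0, ?_⟩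
    · rcases le_total (ex x0 X) 0 with h | h
      · simp only [hy]
        rw [max_eq_right h]
        simp
      · simp only [hy]
        rw [max_eq_left h]
        positivity
    · simp only [hy]
      rw [max_eq_left hexX0.le]
      positivity
  -- swap identity
  have hswap : ∑ X : Finset V, y X * (∑ e, x0 e * coef t hd X e) = ∑ e, x0 e * g e := by
    simp only [hg, Finset.mul_sum]
    rw [Finset.sum_comm]
    exact Finset.sum_congr rfl fun e _ => Finset.sum_congr rfl fun X _ => by ring
  have hstar : ∑ X : Finset V, y X * b X < s * ∑ e, min (g e) 0 := by
    have h1 : ∑ X : Finset V, y X * ex x0 X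
        = (∑ e, x0 e * g e) - ∑ X : Finset V, y X * b X := by
      simp only [hex, mul_sub]
      rw [Finset.sum_sub_distrib, hswap]
    have h2 : ∑ e, x0 e * g e = s * ∑ e, min (g e) 0 := by
      rw [Finset.mul_sum]
      exact Finset.sum_congr rfl fun e _ => hpoint e
    rw [h1, h2] at hP
    linarith
  -- uncross y
  obtain ⟨y', hy'nn, hy'mass, hy'b, hy'chain⟩ := uncross b hb y hynn
  -- g from y'
  have hg' : ∀ e, ∑ X : Finset V, y' X * coef t hd X e = g e := by
    intro e
    have expand : ∀ (w : Finset V → ℝ), ∑ X : Finset V, w X * coef t hd X e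
        = (∑ X : Finset V, w X * (if hd e ∈ X then (1:ℝ) else 0))
          - ∑ X : Finset V, w X * (if t e ∈ X then (1:ℝ) else 0) := by
      intro w
      rw [← Finset.sum_sub_distrib]
      exact Finset.sum_congr rfl fun X _ => by unfold coef; ring
    rw [expand y', hy'mass (hd e), hy'mass (t e), ← expand y]
  -- chain bound
  set L : A → ℝ := fun e => ∑ X : Finset V, y' X * (if t e ∈ X ∧ hd e ∉ X then (1:ℝ) else 0) with hL
  set R : A → ℝ := fun e => ∑ X : Finset V, y' X * (if hd e ∈ X ∧ t e ∉ X then (1:ℝ) else 0) with hR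
  have hLnn : ∀ e, 0 ≤ L e := fun e => Finset.sum_nonneg fun X _ =>
    mul_nonneg (hy'nn X) (by positivity)
  have hRnn : ∀ e, 0 ≤ R e := fun e => Finset.sum_nonneg fun X _ =>
    mul_nonneg (hy'nn X) (by positivity)
  have hgRL : ∀ e, g e = R e - L e := by
    intro e
    rw [← hg' e, hL, hR, ← Finset.sum_sub_distrib]
    refine Finset.sum_congr rfl fun X _ => ?_
    rw [coef_eq]
    ring
  have hminL : ∀ e, min (g e) 0 = -(L e) := by
    intro e
    by_cases hLz : L e = 0
    · rw [hgRL e, hLz, sub_zero, min_eq_right (hRnn e), neg_zero]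
    · -- L e ≠ 0, find a witness set, conclude R e = 0
      have hwit : ∃ X1 : Finset V, y' X1 ≠ 0 ∧ t e ∈ X1 ∧ hd e ∉ X1 := by
        by_contra hcon
        push_neg at hcon
        refine hLz (Finset.sum_eq_zero fun X _ => ?_)
        by_cases hyX : y' X = 0
        · rw [hyX, zero_mul]
        · by_cases hm : t e ∈ X ∧ hd e ∉ X
          · exact absurd (hcon X hyX hm.1) hm.2
          · rw [if_neg hm, mul_zero]
      obtain ⟨X1, hX1ne, hX1t, hX1h⟩ := hwit
      have hRz : R e = 0 := by
        refine Finset.sum_eq_zero fun X _ => ?_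
        by_cases hyX : y' X = 0
        · rw [hyX, zero_mul]
        · by_cases hm : hd e ∈ X ∧ t e ∉ X
          · rcases hy'chain X X1 hyX hX1ne with hsub | hsub
            · exact absurd (hsub hm.1) hX1h
            · exact absurd (hsub hX1t) hm.2
          · rw [if_neg hm, mul_zero]
      rw [hgRL e, hRz, zero_sub, min_eq_left (by linarith [hLnn e])]
  have hsumL : ∑ e, min (g e) 0 = -∑ X : Finset V, y' X * (deltaC t hd X : ℝ) := by
    have h1 : ∑ e, L e = ∑ X : Finset V, y' X * (deltaC t hd X : ℝ) := by
      simp only [hL]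
      rw [Finset.sum_comm]
      refine Finset.sum_congr rfl fun X _ => ?_
      rw [deltaC_real, Finset.mul_sum]
    calc ∑ e, min (g e) 0 = ∑ e, -(L e) := Finset.sum_congr rfl fun e _ => hminL e
      _ = -∑ e, L e := by rw [← Finset.sum_neg_distrib]
      _ = _ := by rw [h1]
  have hfinal : s * ∑ e, min (g e) 0 ≤ ∑ X : Finset V, y' X * b X := by
    rw [hsumL, mul_neg, Finset.mul_sum, ← Finset.sum_neg_distrib]
    refine Finset.sum_le_sum fun X _ => ?_
    have h2 := mul_nonneg (hy'nn X) (hsb X)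
    nlinarith
  linarith [hstar, hy'b, hfinal]

end Construct
theorem stmt_1 {V A : Type*} [Fintype V] [Fintype A] [DecidableEq V] [Nonempty A]
    (t hd : A → V) (b : Finset V → ℝ) (hb : Submodular b)
    (hEuler : ∀ v : V, rhoC t hd {v} = deltaC t hd {v})
    (hfeas : ∃ x : A → ℝ, IsSubmodularFlow t hd b x) :
    sigmaStar t hd b =
      max 0 (sSup {r : ℝ | ∃ X : Finset V, 0 < deltaC t hd X ∧
        r = -(b X) / (deltaC t hd X : ℝ)}) := by
  classical
  set S : Set ℝ := {r : ℝ | ∃ X : Finset V, 0 < deltaC t hd X ∧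
        r = -(b X) / (deltaC t hd X : ℝ)} with hSdef
  set s : ℝ := max 0 (sSup S) with hsdef
  obtain ⟨xf, hxf⟩ := hfeas
  have hEg : ∀ X : Finset V, (rhoC t hd X : ℝ) = (deltaC t hd X : ℝ) :=
    euler_global t hd hEuler
  have hSbdd : BddAbove S := by
    have hsub : S ⊆ (fun X : Finset V => -(b X) / (deltaC t hd X : ℝ)) '' Set.univ := by
      rintro r ⟨X, hX, rfl⟩
      exact ⟨X, Set.mem_univ X, rfl⟩
    exact (Set.Finite.subset (Set.finite_univ.image _) hsub).bddAbove
  have hs0 : 0 ≤ s := le_max_left _ _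
  have hsS : ∀ r ∈ S, r ≤ s := fun r hr => le_trans (le_csSup hSbdd hr) (le_max_right _ _)
  have hnn : ∀ z : A → ℝ, 0 ≤ spread z := by
    intro z
    unfold spread
    have h := (inferInstance : Nonempty A)
    obtain ⟨a⟩ := h
    have h1 : Finset.univ.inf' Finset.univ_nonempty z ≤ z a :=
      Finset.inf'_le _ (Finset.mem_univ a)
    have h2 : z a ≤ Finset.univ.sup' Finset.univ_nonempty z :=
      Finset.le_sup' _ (Finset.mem_univ a)
    linarith
  have hsb : ∀ X : Finset V, 0 ≤ b X + s * (deltaC t hd X : ℝ) := by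
    intro X
    rcases Nat.eq_zero_or_pos (deltaC t hd X) with h0 | hpos
    · have hρ : rhoC t hd X = 0 := by
        have := hEg X
        rw [h0] at this
        exact_mod_cast this
      have h1 : rhoF t hd xf X = 0 := by
        unfold rhoF
        rw [Finset.card_eq_zero.1 hρ, Finset.sum_empty]
      have h2 : deltaF t hd xf X = 0 := by
        unfold deltaF
        rw [Finset.card_eq_zero.1 h0, Finset.sum_empty]
      have h3 := hxf X
      rw [h1, h2] at h3
      rw [h0]
      push_cast
      linarith
    · have hδpos : (0:ℝ) < (deltaC t hd X : ℝ) := by exact_mod_cast hpos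
      have hr : -(b X) / (deltaC t hd X : ℝ) ∈ S := ⟨X, hpos, rfl⟩
      have h1 := hsS _ hr
      rw [div_le_iff₀ hδpos] at h1
      nlinarith
  obtain ⟨x, hxbox, hxflow⟩ := exists_box_flow t hd b hb s hs0 hsb
  have hSpne : {σ : ℝ | ∃ z : A → ℝ, IsSubmodularFlow t hd b z ∧ spread z = σ}.Nonempty :=
    ⟨spread xf, xf, hxf, rfl⟩
  have hSpbdd : BddBelow {σ : ℝ | ∃ z : A → ℝ, IsSubmodularFlow t hd b z ∧ spread z = σ} := by
    refine ⟨0, ?_⟩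
    rintro σ ⟨z, _, rfl⟩
    exact hnn z
  have hup : sigmaStar t hd b ≤ s := by
    have hsp : spread x ≤ s := by
      unfold spread
      have h1 : Finset.univ.sup' Finset.univ_nonempty x ≤ s :=
        Finset.sup'_le _ _ fun e _ => (hxbox e).2
      have h2 : (0:ℝ) ≤ Finset.univ.inf' Finset.univ_nonempty x :=
        Finset.le_inf' _ _ fun e _ => (hxbox e).1
      linarith
    exact le_trans (csInf_le hSpbdd ⟨x, hxflow, rfl⟩) hsp
  have hlow : s ≤ sigmaStar t hd b := by
    refine le_csInf hSpne ?_
    rintro σ ⟨z, hz, rfl⟩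
    refine max_le (hnn z) ?_
    rcases Set.eq_empty_or_nonempty S with hSe | hSne
    · rw [hSe, Real.sSup_empty]
      exact hnn z
    · refine csSup_le hSne ?_
      rintro r ⟨X, hX, rfl⟩
      have hδpos : (0:ℝ) < (deltaC t hd X : ℝ) := by exact_mod_cast hX
      rw [div_le_iff₀ hδpos]
      have h1 : (rhoC t hd X : ℝ) * Finset.univ.inf' Finset.univ_nonempty z
          ≤ rhoF t hd z X := by
        unfold rhoF rhoC
        calc ((inEdges t hd X).card : ℝ) * Finset.univ.inf' Finset.univ_nonempty z
            = ∑ _e ∈ inEdges t hd X, Finset.univ.inf' Finset.univ_nonempty z := by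
              rw [Finset.sum_const, nsmul_eq_mul]
          _ ≤ ∑ e ∈ inEdges t hd X, z e :=
              Finset.sum_le_sum fun e _ => Finset.inf'_le _ (Finset.mem_univ e)
      have h2 : deltaF t hd z X
          ≤ (deltaC t hd X : ℝ) * Finset.univ.sup' Finset.univ_nonempty z := by
        unfold deltaF deltaC
        calc ∑ e ∈ outEdges t hd X, z e
            ≤ ∑ _e ∈ outEdges t hd X, Finset.univ.sup' Finset.univ_nonempty z :=
              Finset.sum_le_sum fun e _ => Finset.le_sup' _ (Finset.mem_univ e)
          _ = ((outEdges t hd X).card : ℝ) * Finset.univ.sup' Finset.univ_nonempty z := by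
              rw [Finset.sum_const, nsmul_eq_mul]
      have h3 := hz X
      have h4 := hEg X
      rw [h4] at h1
      unfold spread
      linarith
  exact le_antisymm hup hlow
end

section
/- Let G = (V,A) be a finite directed graph that is not Eulerian, i.e., there exists a vertex v with ∂({v}) ≠ 0, let b : 2^V → ℝ be submodular, assume A is nonempty and that at least one submodular flow exists. Then σ* = max( 0 , max{ σ(X,Y) : X, Y ⊆ V, ∂(X) ≥ 0, ∂(Y) < 0, ϱ(X) + δ(X) > 0 } ). -/
open Finset

noncomputable def sigmaPair {V A : Type*} [Fintype A] [DecidableEq V] (t hd : A → V)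
    (b : Finset V → ℝ) (X Y : Finset V) : ℝ :=
  (b X * partC t hd Y - b Y * partC t hd X) /
    ((deltaC t hd Y : ℝ) * partC t hd X - (deltaC t hd X : ℝ) * partC t hd Y)

noncomputable def kappaPair {V A : Type*} [Fintype A] [DecidableEq V] (t hd : A → V)
    (b : Finset V → ℝ) (X Y : Finset V) : ℝ :=
  (b X * (deltaC t hd Y : ℝ) - b Y * (deltaC t hd X : ℝ)) /
    ((deltaC t hd Y : ℝ) * partC t hd X - (deltaC t hd X : ℝ) * partC t hd Y)

set_option linter.unusedSectionVars false
section Helpers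

variable {V A : Type*} [Fintype V] [Fintype A] [DecidableEq V]

lemma rhoF_eq_sum (t hd : A → V) (x : A → ℝ) (X : Finset V) :
    rhoF t hd x X = ∑ e : A, if t e ∉ X ∧ hd e ∈ X then x e else 0 := by
  rw [rhoF, inEdges, sum_filter]

lemma deltaF_eq_sum (t hd : A → V) (x : A → ℝ) (X : Finset V) :
    deltaF t hd x X = ∑ e : A, if t e ∈ X ∧ hd e ∉ X then x e else 0 := by
  rw [deltaF, outEdges, sum_filter]

/-- the per-edge "crossing" deficiency indicator -/
noncomputable def sInd (t hd : A → V) (X Y : Finset V) (a : A) : ℝ :=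
  (if t a ∉ X ∧ hd a ∈ X then (1:ℝ) else 0) + (if t a ∉ Y ∧ hd a ∈ Y then 1 else 0)
    - (if t a ∉ X ∪ Y ∧ hd a ∈ X ∪ Y then 1 else 0)
    - (if t a ∉ X ∩ Y ∧ hd a ∈ X ∩ Y then 1 else 0)

lemma sInd_eq_out (t hd : A → V) (X Y : Finset V) (a : A) :
    sInd t hd X Y a =
      (if t a ∈ X ∧ hd a ∉ X then (1:ℝ) else 0) + (if t a ∈ Y ∧ hd a ∉ Y then 1 else 0)
        - (if t a ∈ X ∪ Y ∧ hd a ∉ X ∪ Y then 1 else 0)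
        - (if t a ∈ X ∩ Y ∧ hd a ∉ X ∩ Y then 1 else 0) := by
  unfold sInd
  by_cases h1 : t a ∈ X <;> by_cases h2 : hd a ∈ X <;> by_cases h3 : t a ∈ Y <;>
    by_cases h4 : hd a ∈ Y <;>
    simp [Finset.mem_union, Finset.mem_inter, h1, h2, h3, h4]

lemma sInd_nonneg (t hd : A → V) (X Y : Finset V) (a : A) : 0 ≤ sInd t hd X Y a := by
  unfold sInd
  by_cases h1 : t a ∈ X <;> by_cases h2 : hd a ∈ X <;> by_cases h3 : t a ∈ Y <;>
    by_cases h4 : hd a ∈ Y <;>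
    simp [Finset.mem_union, Finset.mem_inter, h1, h2, h3, h4]

lemma sInd_one (t hd : A → V) {X Y : Finset V} {a : A} (h1 : t a ∉ X) (h2 : hd a ∈ X)
    (h3 : t a ∈ Y) (h4 : hd a ∉ Y) : sInd t hd X Y a = 1 := by
  unfold sInd
  simp [Finset.mem_union, Finset.mem_inter, h1, h2, h3, h4]

lemma rho_uncross (t hd : A → V) (f : A → ℝ) (X Y : Finset V) :
    rhoF t hd f X + rhoF t hd f Y - rhoF t hd f (X ∪ Y) - rhoF t hd f (X ∩ Y)
      = ∑ a : A, f a * sInd t hd X Y a := by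
  simp only [rhoF_eq_sum, ← Finset.sum_add_distrib, ← Finset.sum_sub_distrib]
  refine Finset.sum_congr rfl fun a _ => ?_
  unfold sInd; split_ifs <;> ring

lemma delta_uncross (t hd : A → V) (g : A → ℝ) (X Y : Finset V) :
    deltaF t hd g X + deltaF t hd g Y - deltaF t hd g (X ∪ Y) - deltaF t hd g (X ∩ Y)
      = ∑ a : A, g a * sInd t hd X Y a := by
  simp only [deltaF_eq_sum, ← Finset.sum_add_distrib, ← Finset.sum_sub_distrib]
  refine Finset.sum_congr rfl fun a _ => ?_
  rw [sInd_eq_out]; split_ifs <;> ring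

lemma cross_key (t hd : A → V) (b : Finset V → ℝ) (hb : Submodular b) (f g : A → ℝ)
    (hfg : ∀ a, f a ≤ g a) (hyp : ∀ Z : Finset V, rhoF t hd f Z - deltaF t hd g Z ≤ b Z)
    (e : A) (X Y : Finset V) (hX1 : t e ∉ X) (hX2 : hd e ∈ X) (hY1 : t e ∈ Y) (hY2 : hd e ∉ Y) :
    rhoF t hd f Y - deltaF t hd g Y + g e - b Y ≤ b X - rhoF t hd f X + deltaF t hd g X + f e := by
  have hsub := hb X Y
  have h1 := hyp (X ∪ Y)
  have h2 := hyp (X ∩ Y)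
  have hkey : g e - f e ≤ ∑ a : A, (g a - f a) * sInd t hd X Y a := by
    have := Finset.single_le_sum (f := fun a => (g a - f a) * sInd t hd X Y a)
      (fun a _ => mul_nonneg (sub_nonneg.2 (hfg a)) (sInd_nonneg t hd X Y a)) (mem_univ e)
    simpa [sInd_one t hd hX1 hX2 hY1 hY2] using this
  have hr := rho_uncross t hd f X Y
  have hd' := delta_uncross t hd g X Y
  have hsplit : ∑ a : A, (g a - f a) * sInd t hd X Y a
      = ∑ a : A, g a * sInd t hd X Y a - ∑ a : A, f a * sInd t hd X Y a := by
    rw [← Finset.sum_sub_distrib]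
    exact Finset.sum_congr rfl fun a _ => by ring
  rw [hsplit] at hkey
  linarith

end Helpers
section Feas
variable {V A : Type*} [Fintype V] [Fintype A] [DecidableEq V]

lemma rhoF_update (t hd : A → V) (x : A → ℝ) (e : A) (c : ℝ) (Z : Finset V) [DecidableEq A] :
    rhoF t hd (Function.update x e c) Z
      = rhoF t hd x Z + (if t e ∉ Z ∧ hd e ∈ Z then c - x e else 0) := by
  unfold rhoF inEdges
  by_cases h : t e ∉ Z ∧ hd e ∈ Z
  · have he : e ∈ univ.filter fun a => t a ∉ Z ∧ hd a ∈ Z := by simp [h.1, h.2]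
    rw [Finset.sum_update_of_mem he, if_pos h, Finset.sdiff_singleton_eq_erase,
      Finset.sum_erase_eq_sub he]
    ring
  · have he : e ∉ univ.filter fun a => t a ∉ Z ∧ hd a ∈ Z := by simp; tauto
    rw [Finset.sum_update_of_notMem he, if_neg h, add_zero]

lemma deltaF_update (t hd : A → V) (x : A → ℝ) (e : A) (c : ℝ) (Z : Finset V) [DecidableEq A] :
    deltaF t hd (Function.update x e c) Z
      = deltaF t hd x Z + (if t e ∈ Z ∧ hd e ∉ Z then c - x e else 0) := by
  unfold deltaF outEdges
  by_cases h : t e ∈ Z ∧ hd e ∉ Z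
  · have he : e ∈ univ.filter fun a => t a ∈ Z ∧ hd a ∉ Z := by simp [h.1, h.2]
    rw [Finset.sum_update_of_mem he, if_pos h, Finset.sdiff_singleton_eq_erase,
      Finset.sum_erase_eq_sub he]
    ring
  · have he : e ∉ univ.filter fun a => t a ∈ Z ∧ hd a ∉ Z := by simp; tauto
    rw [Finset.sum_update_of_notMem he, if_neg h, add_zero]

lemma feas_exists (t hd : A → V) (b : Finset V → ℝ) (hb : Submodular b) :
    ∀ (F : Finset A) (f g : A → ℝ), (∀ a, f a ≤ g a) → (∀ a ∉ F, f a = g a) →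
      (∀ Z : Finset V, rhoF t hd f Z - deltaF t hd g Z ≤ b Z) →
      ∃ x : A → ℝ, (∀ a, f a ≤ x a) ∧ (∀ a, x a ≤ g a) ∧ IsSubmodularFlow t hd b x := by
  classical
  intro F
  induction F using Finset.induction_on with
  | empty =>
    intro f g hfg hout hyp
    refine ⟨f, fun a => le_refl _, hfg, fun Z => ?_⟩
    have hgf : deltaF t hd f Z = deltaF t hd g Z :=
      Finset.sum_congr rfl fun a _ => hout a (notMem_empty a)
    rw [hgf]; exact hyp Z
  | @insert e F' he IH =>
    intro f g hfg hout hyp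
    set T : Finset ℝ := insert (g e)
      ((univ.powerset.filter fun Z : Finset V => t e ∉ Z ∧ hd e ∈ Z).image
        fun Z => b Z - rhoF t hd f Z + deltaF t hd g Z + f e) with hT
    have hTne : T.Nonempty := insert_nonempty _ _
    set c : ℝ := T.min' hTne with hc
    have hc_le_ge : c ≤ g e := Finset.min'_le _ _ (mem_insert_self _ _)
    have hmemT : ∀ Z : Finset V, t e ∉ Z → hd e ∈ Z →
        (b Z - rhoF t hd f Z + deltaF t hd g Z + f e) ∈ T := by
      intro Z h1 h2
      exact mem_insert_of_mem (Finset.mem_image_of_mem _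
        (by simp [Finset.mem_filter, Finset.mem_powerset, h1, h2]))
    have hc_le : ∀ Z : Finset V, t e ∉ Z → hd e ∈ Z →
        c ≤ b Z - rhoF t hd f Z + deltaF t hd g Z + f e := fun Z h1 h2 =>
      Finset.min'_le _ _ (hmemT Z h1 h2)
    have hc_ge_fe : f e ≤ c := by
      apply Finset.le_min'
      intro y hy
      rcases Finset.mem_insert.1 hy with h | h
      · exact h ▸ hfg e
      · rcases Finset.mem_image.1 h with ⟨Z, hZ, rfl⟩
        rcases Finset.mem_filter.1 hZ with ⟨-, hZ1, hZ2⟩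
        have := hyp Z
        linarith
    have hc_ge : ∀ Z : Finset V, t e ∈ Z → hd e ∉ Z →
        rhoF t hd f Z - deltaF t hd g Z + g e - b Z ≤ c := by
      intro Z h1 h2
      apply Finset.le_min'
      intro y hy
      rcases Finset.mem_insert.1 hy with h | h
      · have := hyp Z; rw [h]; linarith
      · rcases Finset.mem_image.1 h with ⟨X, hX, rfl⟩
        rcases Finset.mem_filter.1 hX with ⟨-, hX1, hX2⟩
        exact cross_key t hd b hb f g hfg hyp e X Z hX1 hX2 h1 h2
    set f' := Function.update f e c with hf'
    set g' := Function.update g e c with hg'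
    have h1 : ∀ a, f' a ≤ g' a := by
      intro a
      rcases eq_or_ne a e with rfl | h
      · simp [hf', hg']
      · simp [hf', hg', Function.update_apply, h, hfg a]
    have h2 : ∀ a ∉ F', f' a = g' a := by
      intro a ha
      rcases eq_or_ne a e with rfl | h
      · simp [hf', hg']
      · have : a ∉ insert e F' := by simp [h, ha]
        simp [hf', hg', Function.update_apply, h, hout a this]
    have h3 : ∀ Z : Finset V, rhoF t hd f' Z - deltaF t hd g' Z ≤ b Z := by
      intro Z
      rw [hf', hg', rhoF_update, deltaF_update]
      by_cases hin : t e ∉ Z ∧ hd e ∈ Z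
      · have hnot : ¬(t e ∈ Z ∧ hd e ∉ Z) := by tauto
        rw [if_pos hin, if_neg hnot]
        have := hc_le Z hin.1 hin.2
        linarith
      · by_cases hout' : t e ∈ Z ∧ hd e ∉ Z
        · rw [if_neg hin, if_pos hout']
          have := hc_ge Z hout'.1 hout'.2
          linarith
        · rw [if_neg hin, if_neg hout']
          have := hyp Z; linarith
    obtain ⟨x, hx1, hx2, hx3⟩ := IH f' g' h1 h2 h3
    refine ⟨x, fun a => ?_, fun a => ?_, hx3⟩
    · refine le_trans ?_ (hx1 a)
      rcases eq_or_ne a e with rfl | h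
      · simpa [hf'] using hc_ge_fe
      · simp [hf', Function.update_apply, h]
    · refine le_trans (hx2 a) ?_
      rcases eq_or_ne a e with rfl | h
      · simpa [hg'] using hc_le_ge
      · simp [hg', Function.update_apply, h]

end Feas
section Lower
variable {V A : Type*} [Fintype V] [Fintype A] [DecidableEq V]

lemma rhoF_const (t hd : A → V) (μ : ℝ) (Z : Finset V) :
    rhoF t hd (fun _ => μ) Z = μ * (rhoC t hd Z : ℝ) := by
  rw [rhoF, rhoC, Finset.sum_const, nsmul_eq_mul, mul_comm]

lemma deltaF_const (t hd : A → V) (μ : ℝ) (Z : Finset V) :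
    deltaF t hd (fun _ => μ) Z = μ * (deltaC t hd Z : ℝ) := by
  rw [deltaF, deltaC, Finset.sum_const, nsmul_eq_mul, mul_comm]

lemma spread_nonneg {A : Type*} [Fintype A] [Nonempty A] (x : A → ℝ) : 0 ≤ spread x := by
  obtain ⟨a⟩ := (inferInstance : Nonempty A)
  have h1 := Finset.inf'_le (b := a) x (mem_univ a)
  have h2 := Finset.le_sup' (b := a) x (mem_univ a)
  simp only [spread]; linarith

lemma flow_bound [Nonempty A] (t hd : A → V) (b : Finset V → ℝ) (x : A → ℝ)
    (hx : IsSubmodularFlow t hd b x) (Z : Finset V) :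
    (univ.inf' univ_nonempty x) * partC t hd Z - spread x * (deltaC t hd Z : ℝ) ≤ b Z := by
  set m := univ.inf' univ_nonempty x with hm
  set M := univ.sup' univ_nonempty x with hM
  have hrho : m * (rhoC t hd Z : ℝ) ≤ rhoF t hd x Z := by
    rw [rhoF, rhoC]
    calc m * ((inEdges t hd Z).card : ℝ) = (inEdges t hd Z).card • m := by
          rw [nsmul_eq_mul, mul_comm]
      _ ≤ ∑ e ∈ inEdges t hd Z, x e :=
          Finset.card_nsmul_le_sum _ _ _ fun e _ => Finset.inf'_le x (mem_univ e)
  have hdel : deltaF t hd x Z ≤ M * (deltaC t hd Z : ℝ) := by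
    rw [deltaF, deltaC]
    calc ∑ e ∈ outEdges t hd Z, x e ≤ (outEdges t hd Z).card • M :=
          Finset.sum_le_card_nsmul _ _ _ fun e _ => Finset.le_sup' x (mem_univ e)
      _ = M * ((outEdges t hd Z).card : ℝ) := by rw [nsmul_eq_mul, mul_comm]
  have hs : spread x = M - m := rfl
  have := hx Z
  rw [partC, hs]
  nlinarith [hrho, hdel, this]

lemma denom_pos (t hd : A → V) {X Y : Finset V} (hX : 0 ≤ partC t hd X)
    (hY : partC t hd Y < 0) (hcard : 0 < rhoC t hd X + deltaC t hd X) :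
    0 < (deltaC t hd Y : ℝ) * partC t hd X - (deltaC t hd X : ℝ) * partC t hd Y := by
  have hrX : (0:ℝ) ≤ (rhoC t hd X : ℝ) := Nat.cast_nonneg _
  have hdX : (0:ℝ) ≤ (deltaC t hd X : ℝ) := Nat.cast_nonneg _
  have hrY : (0:ℝ) ≤ (rhoC t hd Y : ℝ) := Nat.cast_nonneg _
  have hdY : (0:ℝ) < (deltaC t hd Y : ℝ) := by rw [partC] at hY; linarith
  rcases eq_or_lt_of_le hX with hX0 | hXpos
  · have hc : (0:ℝ) < (rhoC t hd X : ℝ) + (deltaC t hd X : ℝ) := by exact_mod_cast hcard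
    have : (0:ℝ) < (deltaC t hd X : ℝ) := by rw [partC] at hX0; linarith
    nlinarith
  · nlinarith

lemma pair_le_spread [Nonempty A] (t hd : A → V) (b : Finset V → ℝ) (x : A → ℝ)
    (hx : IsSubmodularFlow t hd b x) {X Y : Finset V} (hX : 0 ≤ partC t hd X)
    (hY : partC t hd Y < 0) (hcard : 0 < rhoC t hd X + deltaC t hd X) :
    sigmaPair t hd b X Y ≤ spread x := by
  have hD := denom_pos t hd hX hY hcard
  have h1 := flow_bound t hd b x hx X
  have h2 := flow_bound t hd b x hx Y
  rw [sigmaPair, div_le_iff₀ hD]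
  set m := univ.inf' univ_nonempty x
  set s := spread x
  have t1 := mul_le_mul_of_nonneg_left h1 (le_of_lt (neg_pos.2 hY))
  have t2 := mul_le_mul_of_nonneg_left h2 hX
  nlinarith [t1, t2]

end Lower
theorem stmt_3 {V A : Type*} [Fintype V] [Fintype A] [DecidableEq V] [Nonempty A]
    (t hd : A → V) (b : Finset V → ℝ) (hb : Submodular b)
    (hNonEuler : ∃ v : V, rhoC t hd {v} ≠ deltaC t hd {v})
    (hfeas : ∃ x : A → ℝ, IsSubmodularFlow t hd b x) :
    sigmaStar t hd b =
      max 0 (sSup {r : ℝ | ∃ X Y : Finset V, 0 ≤ partC t hd X ∧ partC t hd Y < 0 ∧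
        0 < rhoC t hd X + deltaC t hd X ∧ r = sigmaPair t hd b X Y}) := by
  classical
  set S : Set ℝ := {r : ℝ | ∃ X Y : Finset V, 0 ≤ partC t hd X ∧ partC t hd Y < 0 ∧
      0 < rhoC t hd X + deltaC t hd X ∧ r = sigmaPair t hd b X Y} with hS
  set sstar : ℝ := max 0 (sSup S) with hsstar
  have hSfin : S.Finite := by
    apply Set.Finite.subset
      (Set.finite_range fun p : Finset V × Finset V => sigmaPair t hd b p.1 p.2)
    rintro r ⟨X, Y, -, -, -, rfl⟩
    exact ⟨(X, Y), rfl⟩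
  have hSbdd : BddAbove S := hSfin.bddAbove
  have hle : ∀ r ∈ S, r ≤ sstar := fun r hr => le_trans (le_csSup hSbdd hr) (le_max_right _ _)
  have hs0 : (0:ℝ) ≤ sstar := le_max_left _ _
  obtain ⟨x₀, hx₀⟩ := hfeas
  obtain ⟨v, hv⟩ := hNonEuler
  have hvR : partC t hd {v} ≠ 0 := by
    rw [partC]
    intro h
    exact hv (by exact_mod_cast sub_eq_zero.mp h)
  have hcompl : ∀ X : Finset V, partC t hd (univ \ X) = - partC t hd X := by
    intro X
    have h1 : inEdges t hd (univ \ X) = outEdges t hd X := by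
      ext a; simp [inEdges, outEdges, Finset.mem_sdiff]
    have h2 : outEdges t hd (univ \ X) = inEdges t hd X := by
      ext a; simp [inEdges, outEdges, Finset.mem_sdiff]
    rw [partC, partC, rhoC, deltaC, rhoC, deltaC, h1, h2]; ring
  obtain ⟨Y₀, hY₀⟩ : ∃ Y₀ : Finset V, partC t hd Y₀ < 0 := by
    rcases lt_or_gt_of_ne hvR with h | h
    · exact ⟨{v}, h⟩
    · exact ⟨univ \ {v}, by rw [hcompl]; linarith⟩
  obtain ⟨X₁, hX₁⟩ : ∃ X₁ : Finset V, 0 < partC t hd X₁ := by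
    rcases lt_or_gt_of_ne hvR with h | h
    · exact ⟨univ \ {v}, by rw [hcompl]; linarith⟩
    · exact ⟨{v}, h⟩
  -- choose μ
  set Q : Finset (Finset V) := univ.powerset.filter (fun Z : Finset V => 0 < partC t hd Z)
    with hQ
  have hQne : Q.Nonempty :=
    ⟨X₁, Finset.mem_filter.2 ⟨Finset.mem_powerset.2 (subset_univ X₁), hX₁⟩⟩
  obtain ⟨X₀, hX₀Q, hX₀min⟩ := Q.exists_min_image
    (fun Z => (b Z + sstar * (deltaC t hd Z : ℝ)) / partC t hd Z) hQne
  have hX₀pos : 0 < partC t hd X₀ := (Finset.mem_filter.1 hX₀Q).2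
  set μ : ℝ := (b X₀ + sstar * (deltaC t hd X₀ : ℝ)) / partC t hd X₀ with hμeq
  have hμle : ∀ Z : Finset V, 0 < partC t hd Z →
      μ ≤ (b Z + sstar * (deltaC t hd Z : ℝ)) / partC t hd Z := by
    intro Z hZ
    exact hX₀min Z (Finset.mem_filter.2 ⟨Finset.mem_powerset.2 (subset_univ Z), hZ⟩)
  have hcardX₀ : 0 < rhoC t hd X₀ + deltaC t hd X₀ := by
    have h1 : (0:ℝ) < (rhoC t hd X₀ : ℝ) := by
      have := Nat.cast_nonneg (α := ℝ) (deltaC t hd X₀)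
      rw [partC] at hX₀pos; linarith
    have : 0 < rhoC t hd X₀ := by exact_mod_cast h1
    omega
  -- key: μ is a good translation
  have hgood : ∀ Z : Finset V, μ * partC t hd Z - sstar * (deltaC t hd Z : ℝ) ≤ b Z := by
    intro Z
    rcases lt_trichotomy (partC t hd Z) 0 with hneg | hzero | hpos
    · have hmem : sigmaPair t hd b X₀ Z ∈ S :=
        ⟨X₀, Z, le_of_lt hX₀pos, hneg, hcardX₀, rfl⟩
      have hσ := hle _ hmem
      have hD := denom_pos t hd (le_of_lt hX₀pos) hneg hcardX₀
      rw [sigmaPair, div_le_iff₀ hD] at hσ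
      rw [sub_le_iff_le_add, hμeq, div_mul_eq_mul_div, div_le_iff₀ hX₀pos]
      nlinarith [hσ]
    · by_cases hδ : deltaC t hd Z = 0
      · have hρ : rhoC t hd Z = 0 := by
          rw [partC, hδ] at hzero
          have h0 : (rhoC t hd Z : ℝ) = 0 := by push_cast at hzero; linarith
          exact_mod_cast h0
        have hbZ : 0 ≤ b Z := by
          have := hx₀ Z
          rw [rhoF, deltaF, Finset.card_eq_zero.1 hρ, Finset.card_eq_zero.1 hδ,
            Finset.sum_empty] at this
          linarith
        rw [hzero, hδ]
        push_cast
        linarith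
      · have hδpos : (0:ℝ) < (deltaC t hd Z : ℝ) := by exact_mod_cast Nat.pos_of_ne_zero hδ
        have hcardZ : 0 < rhoC t hd Z + deltaC t hd Z := by
          have := Nat.pos_of_ne_zero hδ; omega
        have hmem : sigmaPair t hd b Z Y₀ ∈ S := ⟨Z, Y₀, le_of_eq hzero.symm, hY₀, hcardZ, rfl⟩
        have hσ := hle _ hmem
        have hpY0 : partC t hd Y₀ ≠ 0 := ne_of_lt hY₀
        have hδne : (deltaC t hd Z : ℝ) ≠ 0 := ne_of_gt hδpos
        have hval : sigmaPair t hd b Z Y₀ = -(b Z / (deltaC t hd Z : ℝ)) := by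
          rw [sigmaPair, hzero]
          rw [mul_zero, mul_zero, sub_zero, zero_sub, div_neg]
          field_simp
        rw [hval] at hσ
        rw [hzero, mul_zero, zero_sub, neg_le]
        have h2 := mul_le_mul_of_nonneg_right hσ (le_of_lt hδpos)
        rw [neg_mul, div_mul_cancel₀ _ hδne] at h2
        linarith
    · have := hμle Z hpos
      rw [le_div_iff₀ hpos] at this
      linarith
  -- construct an optimal flow
  have hyp : ∀ Z : Finset V,
      rhoF t hd (fun _ => μ) Z - deltaF t hd (fun _ => μ + sstar) Z ≤ b Z := by
    intro Z
    rw [rhoF_const, deltaF_const]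
    have := hgood Z
    rw [partC] at this
    nlinarith [this]
  obtain ⟨xh, hb1, hb2, hflow⟩ := feas_exists t hd b hb univ (fun _ => μ)
    (fun _ => μ + sstar) (fun a => by show μ ≤ μ + sstar; linarith) (fun a ha => absurd (mem_univ a) ha) hyp
  have hspread : spread xh ≤ sstar := by
    have hsup : univ.sup' univ_nonempty xh ≤ μ + sstar := Finset.sup'_le _ _ fun a _ => hb2 a
    have hinf : μ ≤ univ.inf' univ_nonempty xh := Finset.le_inf' _ _ fun a _ => hb1 a
    simp only [spread]; linarith
  -- conclude
  rw [sigmaStar]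
  apply le_antisymm
  · refine le_trans (csInf_le ⟨0, ?_⟩ (show spread xh ∈
        {s : ℝ | ∃ x : A → ℝ, IsSubmodularFlow t hd b x ∧ spread x = s} from
        ⟨xh, hflow, rfl⟩)) hspread
    rintro sp ⟨x, hx, rfl⟩
    exact spread_nonneg x
  · apply le_csInf ⟨spread xh, show spread xh ∈
      {s : ℝ | ∃ x : A → ℝ, IsSubmodularFlow t hd b x ∧ spread x = s} from ⟨xh, hflow, rfl⟩⟩
    rintro sp ⟨x, hx, rfl⟩
    apply max_le (spread_nonneg x)
    apply Real.sSup_le _ (spread_nonneg x)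
    rintro r ⟨X, Y, h1, h2, h3, rfl⟩
    exact pair_le_spread t hd b x hx h1 h2 h3
end

section
/- Let G = (V,A) be a finite directed graph and b : 2^V → ℝ a set function. Let X, Y, C ⊆ V with ∂(X) ≥ 0, ∂(Y) < 0, ϱ(X) + δ(X) > 0, ∂(C) ≥ 0 and ϱ(C) + δ(C) > 0, and set σ = σ(X,Y) and κ = κ(X,Y) (well-defined since δ(Y)∂(X) − δ(X)∂(Y) > 0 under these conditions). If κ∂(C) − σδ(C) > b(C), then σ(X,Y) < σ(C,Y), where σ(C,Y) = (b(C)∂(Y) − b(Y)∂(C)) / (δ(Y)∂(C) − δ(C)∂(Y)) and its denominator is strictly positive. -/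
open Finset

lemma denom_pos_aux (rX dX rY dY : ℝ) (_hrX : 0 ≤ rX) (hdX : 0 ≤ dX) (hrY : 0 ≤ rY)
    (hX : 0 ≤ rX - dX) (hY : rY - dY < 0) (hXpos : 0 < rX + dX) :
    0 < dY * (rX - dX) - dX * (rY - dY) := by
  have hdY : 0 < dY := by linarith
  rcases lt_or_eq_of_le hdX with h | h
  · nlinarith [mul_pos h (show 0 < dY - rY by linarith), mul_nonneg hdY.le hX]
  · have hpX : 0 < rX - dX := by linarith
    nlinarith [mul_pos hdY hpX]

theorem stmt_5 {V A : Type*} [Fintype V] [Fintype A] [DecidableEq V]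
    (t hd : A → V) (b : Finset V → ℝ) (X Y C : Finset V)
    (hX : 0 ≤ partC t hd X) (hY : partC t hd Y < 0)
    (hXpos : 0 < rhoC t hd X + deltaC t hd X)
    (hC : 0 ≤ partC t hd C) (hCpos : 0 < rhoC t hd C + deltaC t hd C)
    (hviol : b C < kappaPair t hd b X Y * partC t hd C -
      sigmaPair t hd b X Y * (deltaC t hd C : ℝ)) :
    0 < (deltaC t hd Y : ℝ) * partC t hd X - (deltaC t hd X : ℝ) * partC t hd Y ∧
    0 < (deltaC t hd Y : ℝ) * partC t hd C - (deltaC t hd C : ℝ) * partC t hd Y ∧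
    sigmaPair t hd b X Y < sigmaPair t hd b C Y := by
  set rX := (rhoC t hd X : ℝ) with hrXdef
  set dX := (deltaC t hd X : ℝ) with hdXdef
  set rY := (rhoC t hd Y : ℝ) with hrYdef
  set dY := (deltaC t hd Y : ℝ) with hdYdef
  set rC := (rhoC t hd C : ℝ) with hrCdef
  set dC := (deltaC t hd C : ℝ) with hdCdef
  have hpX : partC t hd X = rX - dX := rfl
  have hpY : partC t hd Y = rY - dY := rfl
  have hpC : partC t hd C = rC - dC := rfl
  rw [hpX] at hX ⊢
  rw [hpY] at hY ⊢
  rw [hpC] at hC ⊢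
  have hrXn : (0:ℝ) ≤ rX := Nat.cast_nonneg _
  have hdXn : (0:ℝ) ≤ dX := Nat.cast_nonneg _
  have hrYn : (0:ℝ) ≤ rY := Nat.cast_nonneg _
  have hrCn : (0:ℝ) ≤ rC := Nat.cast_nonneg _
  have hXpos' : (0:ℝ) < rX + dX := by
    have : (0:ℝ) < ((rhoC t hd X + deltaC t hd X : ℕ) : ℝ) := by exact_mod_cast hXpos
    push_cast at this; linarith
  have hCpos' : (0:ℝ) < rC + dC := by
    have : (0:ℝ) < ((rhoC t hd C + deltaC t hd C : ℕ) : ℝ) := by exact_mod_cast hCpos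
    push_cast at this; linarith
  have hD : 0 < dY * (rX - dX) - dX * (rY - dY) :=
    denom_pos_aux rX dX rY dY hrXn hdXn hrYn hX hY hXpos'
  have hDC : 0 < dY * (rC - dC) - dC * (rY - dY) :=
    denom_pos_aux rC dC rY dY hrCn (Nat.cast_nonneg _) hrYn hC hY hCpos'
  refine ⟨hD, hDC, ?_⟩
  rw [sigmaPair, sigmaPair, hpX, hpY, hpC]
  simp only [← hdXdef, ← hdYdef, ← hdCdef]
  rw [kappaPair, sigmaPair, hpX, hpY, hpC] at hviol
  simp only [← hdXdef, ← hdYdef, ← hdCdef] at hviol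
  rw [div_lt_div_iff₀ hD hDC]
  rw [div_mul_eq_mul_div, div_mul_eq_mul_div, ← sub_div, lt_div_iff₀ hD] at hviol
  nlinarith [mul_pos (show 0 < (b X * dY - b Y * dX) * (rC - dC) -
      (b X * (rY - dY) - b Y * (rX - dX)) * dC - b C * (dY * (rX - dX) - dX * (rY - dY))
      by linarith) (show 0 < -(rY - dY) by linarith)]
end

section
/- Let G = (V,A) be a finite directed graph and b : 2^V → ℝ a set function. Let X, Y, C ⊆ V with ∂(X) = 0, ϱ(X) + δ(X) > 0 (hence δ(X) > 0), ∂(Y) < 0 and ∂(C) < 0, and set σ = σ(X,Y) and κ = κ(X,Y) (well-defined since δ(Y)∂(X) − δ(X)∂(Y) = −δ(X)∂(Y) > 0). If κ∂(C) − σδ(C) > b(C), then κ(X,Y) < κ(X,C), where κ(X,C) = (b(X)δ(C) − b(C)δ(X)) / (δ(C)∂(X) − δ(X)∂(C)) and its denominator −δ(X)∂(C) is strictly positive. -/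
open Finset

theorem stmt_6 {V A : Type*} [Fintype V] [Fintype A] [DecidableEq V]
    (t hd : A → V) (b : Finset V → ℝ) (X Y C : Finset V)
    (hX : partC t hd X = 0) (hXpos : 0 < rhoC t hd X + deltaC t hd X)
    (hY : partC t hd Y < 0) (hC : partC t hd C < 0)
    (hviol : b C < kappaPair t hd b X Y * partC t hd C -
      sigmaPair t hd b X Y * (deltaC t hd C : ℝ)) :
    0 < deltaC t hd X ∧
    0 < (deltaC t hd Y : ℝ) * partC t hd X - (deltaC t hd X : ℝ) * partC t hd Y ∧
    0 < (deltaC t hd C : ℝ) * partC t hd X - (deltaC t hd X : ℝ) * partC t hd C ∧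
    kappaPair t hd b X Y < kappaPair t hd b X C := by
  have hdX : (0:ℝ) < (deltaC t hd X : ℝ) := by
    have h1 : (rhoC t hd X : ℝ) - (deltaC t hd X : ℝ) = 0 := hX
    have h2 : (0:ℝ) < (rhoC t hd X : ℝ) + (deltaC t hd X : ℝ) := by exact_mod_cast hXpos
    linarith
  have hDY : 0 < (deltaC t hd Y : ℝ) * partC t hd X - (deltaC t hd X : ℝ) * partC t hd Y := by
    rw [hX]; nlinarith
  have hDC : 0 < (deltaC t hd C : ℝ) * partC t hd X - (deltaC t hd X : ℝ) * partC t hd C := by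
    rw [hX]; nlinarith
  refine ⟨by exact_mod_cast hdX, hDY, hDC, ?_⟩
  unfold kappaPair sigmaPair at hviol; unfold kappaPair
  rw [hX] at hviol hDY hDC ⊢
  simp only [mul_zero, zero_sub] at hviol hDY hDC ⊢
  rw [div_lt_div_iff₀ hDY hDC]
  rw [div_mul_eq_mul_div, div_mul_eq_mul_div, div_sub_div_same,
    lt_div_iff₀ hDY] at hviol
  nlinarith [mul_pos hDY hDC, hviol, hdX]
end

section
/- Let G = (V,A) be a finite directed graph, c : A → ℝ a strictly positive weight function, c̃ = 1/c, and b : 2^V → ℝ submodular. For every κ ∈ ℝ and σ ≥ 0, there exists a submodular flow x with κ·c̃(e) ≤ x(e) ≤ (κ+σ)·c̃(e) for all e ∈ A if and only if b(X) − κ∂_c̃(X) + σδ_c̃(X) ≥ 0 holds for every X ⊆ V. Consequently, s(κ) = min{ σ ≥ 0 : b(X) − κ∂_c̃(X) + σδ_c̃(X) ≥ 0 for all X ⊆ V } whenever this set is nonempty. -/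
open Finset

noncomputable def rhoW {V A : Type*} [Fintype A] [DecidableEq V] (t hd : A → V)
    (c : A → ℝ) (X : Finset V) : ℝ :=
  ∑ e ∈ inEdges t hd X, (c e)⁻¹

noncomputable def deltaW {V A : Type*} [Fintype A] [DecidableEq V] (t hd : A → V)
    (c : A → ℝ) (X : Finset V) : ℝ :=
  ∑ e ∈ outEdges t hd X, (c e)⁻¹

noncomputable def partW {V A : Type*} [Fintype A] [DecidableEq V] (t hd : A → V)
    (c : A → ℝ) (X : Finset V) : ℝ :=
  rhoW t hd c X - deltaW t hd c X

noncomputable def spreadW {A : Type*} [Fintype A] [Nonempty A] (c x : A → ℝ) : ℝ :=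
  univ.sup' univ_nonempty (fun e => c e * x e) - univ.inf' univ_nonempty (fun e => c e * x e)

noncomputable def sigmaStarW {V A : Type*} [Fintype A] [DecidableEq V] [Nonempty A]
    (t hd : A → V) (c : A → ℝ) (b : Finset V → ℝ) : ℝ :=
  sInf {s : ℝ | ∃ x : A → ℝ, IsSubmodularFlow t hd b x ∧ spreadW c x = s}

noncomputable def sW {V A : Type*} [Fintype A] [DecidableEq V] (t hd : A → V)
    (c : A → ℝ) (b : Finset V → ℝ) (κ : ℝ) : ℝ :=
  sInf {σ : ℝ | 0 ≤ σ ∧ ∃ x : A → ℝ, IsSubmodularFlow t hd b x ∧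
    ∀ e : A, κ * (c e)⁻¹ ≤ x e ∧ x e ≤ (κ + σ) * (c e)⁻¹}

section helpers
variable {V A : Type*} [Fintype A] [DecidableEq V] (t hd : A → V)

lemma in_sub_out (p : A → ℝ) (X : Finset V) :
    (∑ e ∈ inEdges t hd X, p e) - (∑ e ∈ outEdges t hd X, p e)
      = ∑ e : A, p e * ((if hd e ∈ X then (1:ℝ) else 0) - (if t e ∈ X then 1 else 0)) := by
  rw [inEdges, outEdges, Finset.sum_filter, Finset.sum_filter, ← Finset.sum_sub_distrib]
  refine Finset.sum_congr rfl fun e _ => ?_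
  by_cases ht : t e ∈ X <;> by_cases hh : hd e ∈ X <;> simp [ht, hh]

lemma modular_eq (p : A → ℝ) (X Y : Finset V) :
    ((∑ e ∈ inEdges t hd X, p e) - (∑ e ∈ outEdges t hd X, p e))
      + ((∑ e ∈ inEdges t hd Y, p e) - (∑ e ∈ outEdges t hd Y, p e))
    = ((∑ e ∈ inEdges t hd (X ∪ Y), p e) - (∑ e ∈ outEdges t hd (X ∪ Y), p e))
      + ((∑ e ∈ inEdges t hd (X ∩ Y), p e) - (∑ e ∈ outEdges t hd (X ∩ Y), p e)) := by
  rw [in_sub_out, in_sub_out, in_sub_out, in_sub_out, ← Finset.sum_add_distrib,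
    ← Finset.sum_add_distrib]
  refine Finset.sum_congr rfl fun e _ => ?_
  by_cases h1 : t e ∈ X <;> by_cases h2 : t e ∈ Y <;> by_cases h3 : hd e ∈ X <;>
    by_cases h4 : hd e ∈ Y <;>
    simp [h1, h2, h3, h4, Finset.mem_union, Finset.mem_inter] <;> ring

lemma out_submod (q : A → ℝ) (hq : ∀ e, 0 ≤ q e) (X Y : Finset V) (a : A)
    (h1 : t a ∈ X) (h2 : t a ∉ Y) (h3 : hd a ∉ X) (h4 : hd a ∈ Y) :
    (∑ e ∈ outEdges t hd (X ∪ Y), q e) + (∑ e ∈ outEdges t hd (X ∩ Y), q e) + q a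
      ≤ (∑ e ∈ outEdges t hd X, q e) + (∑ e ∈ outEdges t hd Y, q e) := by
  classical
  have hqa : q a = ∑ e : A, (if e = a then q a else 0) := by simp
  rw [outEdges, outEdges, outEdges, outEdges, Finset.sum_filter, Finset.sum_filter,
    Finset.sum_filter, Finset.sum_filter, hqa, ← Finset.sum_add_distrib,
    ← Finset.sum_add_distrib, ← Finset.sum_add_distrib]
  refine Finset.sum_le_sum fun e _ => ?_
  by_cases hea : e = a
  · subst hea
    simp [h1, h2, h3, h4, Finset.mem_union, Finset.mem_inter]
  · rw [if_neg hea, add_zero]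
    by_cases g1 : t e ∈ X <;> by_cases g2 : t e ∈ Y <;> by_cases g3 : hd e ∈ X <;>
      by_cases g4 : hd e ∈ Y <;>
      simp [g1, g2, g3, g4, Finset.mem_union, Finset.mem_inter] <;> linarith [hq e]

end helpers

section main
variable {V A : Type*} [Fintype V] [Fintype A] [DecidableEq V] (t hd : A → V)

/-- the slack function -/
noncomputable def gfun (b : Finset V → ℝ) (p q : A → ℝ) (X : Finset V) : ℝ :=
  b X - (∑ e ∈ inEdges t hd X, p e) + (∑ e ∈ outEdges t hd X, q e)

lemma gfun_superadd (b : Finset V → ℝ) (hb : Submodular b) (p q : A → ℝ)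
    (hpq : ∀ e, p e ≤ q e) (X Y : Finset V) (a : A)
    (h1 : t a ∈ X) (h2 : t a ∉ Y) (h3 : hd a ∉ X) (h4 : hd a ∈ Y) :
    gfun t hd b p q (X ∪ Y) + gfun t hd b p q (X ∩ Y) + (q a - p a)
      ≤ gfun t hd b p q X + gfun t hd b p q Y := by
  have hmod := modular_eq t hd p X Y
  have hsub := out_submod t hd (fun e => q e - p e) (fun e => sub_nonneg.2 (hpq e)) X Y a h1 h2 h3 h4
  have hsplit : ∀ Z : Finset V, gfun t hd b p q Z
      = b Z - ((∑ e ∈ inEdges t hd Z, p e) - (∑ e ∈ outEdges t hd Z, p e))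
        + (∑ e ∈ outEdges t hd Z, (q e - p e)) := by
    intro Z
    rw [gfun, Finset.sum_sub_distrib]
    ring
  rw [hsplit, hsplit, hsplit, hsplit]
  have hbb := hb X Y
  linarith
end main

section induct
variable {V A : Type*} [Fintype V] [Fintype A] [DecidableEq V] [DecidableEq A] (t hd : A → V)

lemma sum_one_diff {S : Finset A} {f f' : A → ℝ} (a : A) (h : ∀ e, e ≠ a → f' e = f e) :
    ∑ e ∈ S, f' e = (∑ e ∈ S, f e) + (if a ∈ S then f' a - f a else 0) := by
  by_cases haS : a ∈ S
  · rw [if_pos haS, ← Finset.sum_erase_add S f' haS, ← Finset.sum_erase_add S f haS,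
      Finset.sum_congr rfl (fun e he => h e (Finset.ne_of_mem_erase he))]
    ring
  · rw [if_neg haS, add_zero]
    exact Finset.sum_congr rfl fun e he => h e (fun hea => haS (hea ▸ he))

lemma exists_flow (b : Finset V → ℝ) (hb : Submodular b) (l u : A → ℝ)
    (hlu : ∀ e, l e ≤ u e) (F : Finset A) :
    ∀ x : A → ℝ, (∀ e, e ∉ F → l e ≤ x e ∧ x e ≤ u e) →
    (∀ X : Finset V,
      (∑ e ∈ inEdges t hd X, (if e ∈ F then l e else x e))
        - (∑ e ∈ outEdges t hd X, (if e ∈ F then u e else x e)) ≤ b X) →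
    ∃ y : A → ℝ, (∀ e, l e ≤ y e ∧ y e ≤ u e) ∧ IsSubmodularFlow t hd b y := by
  induction F using Finset.induction_on with
  | empty =>
    intro x hx hcond
    exact ⟨x, fun e => hx e (Finset.notMem_empty e),
      fun X => by simpa [rhoF, deltaF] using hcond X⟩
  | @insert a s ha ih =>
    intro x hx hcond
    set p : A → ℝ := fun e => if e ∈ insert a s then l e else x e with hp
    set q : A → ℝ := fun e => if e ∈ insert a s then u e else x e with hq
    have hpq : ∀ e, p e ≤ q e := by
      intro e; simp only [hp, hq]
      split_ifs with h; exacts [hlu e, le_refl _]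
    have hg : ∀ X, 0 ≤ gfun t hd b p q X := by
      intro X
      have := hcond X
      simp only [gfun]
      linarith
    have hne : (univ : Finset (Finset V)).Nonempty := ⟨∅, Finset.mem_univ _⟩
    set f : Finset V → ℝ := fun X => if t a ∈ X ∧ hd a ∉ X then u a - gfun t hd b p q X else l a
      with hf
    set α : ℝ := univ.sup' hne f with hα
    have hfX : ∀ X : Finset V,
        f X = if t a ∈ X ∧ hd a ∉ X then u a - gfun t hd b p q X else l a := fun X => rfl
    have hαl : l a ≤ α := by
      have h := Finset.le_sup' f (Finset.mem_univ (∅ : Finset V))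
      rw [hfX, if_neg (by simp)] at h
      rw [hα]; exact h
    have hαu : α ≤ u a := by
      refine Finset.sup'_le hne f fun X _ => ?_
      simp only [hf]
      split_ifs with h
      · linarith [hg X]
      · exact hlu a
    have hout : ∀ X : Finset V, t a ∈ X → hd a ∉ X → u a - gfun t hd b p q X ≤ α := by
      intro X h1 h3
      have h := Finset.le_sup' f (Finset.mem_univ X)
      rw [hfX, if_pos ⟨h1, h3⟩] at h
      rw [hα]; exact h
    have hin : ∀ Y : Finset V, t a ∉ Y → hd a ∈ Y → α ≤ l a + gfun t hd b p q Y := by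
      intro Y h2 h4
      refine Finset.sup'_le hne f fun X _ => ?_
      simp only [hf]
      split_ifs with h
      · have key := gfun_superadd t hd b hb p q hpq X Y a h.1 h2 h.2 h4
        have hqa : q a - p a = u a - l a := by
          simp [hp, hq, Finset.mem_insert_self]
        rw [hqa] at key
        linarith [hg (X ∪ Y), hg (X ∩ Y)]
      · linarith [hg Y]
    set x' : A → ℝ := Function.update x a α with hx'
    refine ih x' ?_ ?_
    · intro e hes
      by_cases hea : e = a
      · subst hea; simp [hx', hαl, hαu]
      · rw [hx', Function.update_of_ne hea]
        exact hx e (by simp [Finset.mem_insert, hea, hes])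
    · intro X
      have hgX : gfun t hd b p q X = b X - ((∑ e ∈ inEdges t hd X, p e)
          - (∑ e ∈ outEdges t hd X, q e)) := by rw [gfun]; ring
      have hip : ∀ e, e ≠ a → (if e ∈ s then l e else x' e) = p e := by
        intro e hea
        rw [hx', Function.update_of_ne hea, hp]
        simp [Finset.mem_insert, hea]
      have hiq : ∀ e, e ≠ a → (if e ∈ s then u e else x' e) = q e := by
        intro e hea
        rw [hx', Function.update_of_ne hea, hq]
        simp [Finset.mem_insert, hea]
      rw [sum_one_diff a hip, sum_one_diff a hiq]
      have hva : (if a ∈ s then l a else x' a) = α := by simp [ha, hx']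
      have hwa : (if a ∈ s then u a else x' a) = α := by simp [ha, hx']
      have hpa : p a = l a := by simp [hp]
      have hqa : q a = u a := by simp [hq]
      rw [hva, hwa, hpa, hqa]
      by_cases hIn : a ∈ inEdges t hd X
      · have h1 : t a ∉ X ∧ hd a ∈ X := by simpa [inEdges] using hIn
        have h2 : a ∉ outEdges t hd X := by simp [outEdges, h1.1]
        rw [if_pos hIn, if_neg h2]
        have := hin X h1.1 h1.2
        have hgX' := hgX
        linarith [hg X]
      · by_cases hOut : a ∈ outEdges t hd X
        · have h1 : t a ∈ X ∧ hd a ∉ X := by simpa [outEdges] using hOut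
          rw [if_neg hIn, if_pos hOut]
          have := hout X h1.1 h1.2
          linarith [hg X]
        · rw [if_neg hIn, if_neg hOut]
          have := hg X
          rw [hgX] at this
          linarith
end induct

theorem stmt_10 {V A : Type*} [Fintype V] [Fintype A] [DecidableEq V]
    (t hd : A → V) (c : A → ℝ) (hc : ∀ e : A, 0 < c e)
    (b : Finset V → ℝ) (hb : Submodular b) :
    (∀ κ σ : ℝ, 0 ≤ σ →
      ((∃ x : A → ℝ, IsSubmodularFlow t hd b x ∧
          ∀ e : A, κ * (c e)⁻¹ ≤ x e ∧ x e ≤ (κ + σ) * (c e)⁻¹) ↔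
        ∀ X : Finset V, 0 ≤ b X - κ * partW t hd c X + σ * deltaW t hd c X)) ∧
    (∀ κ : ℝ,
      ({σ : ℝ | 0 ≤ σ ∧
          ∀ X : Finset V, 0 ≤ b X - κ * partW t hd c X + σ * deltaW t hd c X}).Nonempty →
        sW t hd c b κ =
          sInf {σ : ℝ | 0 ≤ σ ∧
            ∀ X : Finset V, 0 ≤ b X - κ * partW t hd c X + σ * deltaW t hd c X} ∧
        sInf {σ : ℝ | 0 ≤ σ ∧
            ∀ X : Finset V, 0 ≤ b X - κ * partW t hd c X + σ * deltaW t hd c X} ∈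
          {σ : ℝ | 0 ≤ σ ∧
            ∀ X : Finset V, 0 ≤ b X - κ * partW t hd c X + σ * deltaW t hd c X}) := by
  classical
  have hdnn : ∀ X : Finset V, 0 ≤ deltaW t hd c X :=
    fun X => Finset.sum_nonneg fun e _ => inv_nonneg.2 (hc e).le
  have expand : ∀ κ σ : ℝ, ∀ X : Finset V,
      κ * partW t hd c X - σ * deltaW t hd c X
        = (∑ e ∈ inEdges t hd X, κ * (c e)⁻¹)
          - (∑ e ∈ outEdges t hd X, (κ + σ) * (c e)⁻¹) := by
    intro κ σ X
    simp only [partW, rhoW, deltaW, ← Finset.mul_sum]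
    ring
  have main : ∀ κ σ : ℝ, 0 ≤ σ →
      ((∃ x : A → ℝ, IsSubmodularFlow t hd b x ∧
          ∀ e : A, κ * (c e)⁻¹ ≤ x e ∧ x e ≤ (κ + σ) * (c e)⁻¹) ↔
        ∀ X : Finset V, 0 ≤ b X - κ * partW t hd c X + σ * deltaW t hd c X) := by
    intro κ σ hσ
    constructor
    · rintro ⟨x, hflow, hbd⟩ X
      have h1 : (∑ e ∈ inEdges t hd X, κ * (c e)⁻¹) ≤ rhoF t hd x X :=
        Finset.sum_le_sum fun e _ => (hbd e).1
      have h2 : deltaF t hd x X ≤ ∑ e ∈ outEdges t hd X, (κ + σ) * (c e)⁻¹ :=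
        Finset.sum_le_sum fun e _ => (hbd e).2
      have h3 := hflow X
      have h4 := expand κ σ X
      linarith
    · intro hcond
      have hlu : ∀ e : A, κ * (c e)⁻¹ ≤ (κ + σ) * (c e)⁻¹ := fun e =>
        mul_le_mul_of_nonneg_right (by linarith) (inv_nonneg.2 (hc e).le)
      obtain ⟨y, hy, hflow⟩ := exists_flow t hd b hb
        (fun e => κ * (c e)⁻¹) (fun e => (κ + σ) * (c e)⁻¹) hlu
        (univ : Finset A) (fun e => κ * (c e)⁻¹)
        (fun e he => absurd (Finset.mem_univ e) he)
        (by
          intro X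
          have h4 := expand κ σ X
          have h5 := hcond X
          simp only [Finset.mem_univ, if_true]
          linarith)
      exact ⟨y, hflow, hy⟩
  refine ⟨main, ?_⟩
  intro κ hne
  set S : Set ℝ := {σ : ℝ | 0 ≤ σ ∧
      ∀ X : Finset V, 0 ≤ b X - κ * partW t hd c X + σ * deltaW t hd c X} with hS
  have hbdd : BddBelow S := ⟨0, fun σ hσ => hσ.1⟩
  have h0 : 0 ≤ sInf S := le_csInf hne fun σ hσ => hσ.1
  have hmem : sInf S ∈ S := by
    refine ⟨h0, fun X => ?_⟩
    obtain ⟨σ₀, hσ₀⟩ := id hne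
    rcases eq_or_lt_of_le (hdnn X) with hd0 | hd0
    · have h1 := hσ₀.2 X
      rw [← hd0] at h1 ⊢
      linarith
    · have hlb : (κ * partW t hd c X - b X) / deltaW t hd c X ≤ sInf S := by
        refine le_csInf hne fun σ hσ => ?_
        rw [div_le_iff₀ hd0]
        have := hσ.2 X
        linarith
      rw [div_le_iff₀ hd0] at hlb
      linarith
  have hset : {σ : ℝ | 0 ≤ σ ∧ ∃ x : A → ℝ, IsSubmodularFlow t hd b x ∧
      ∀ e : A, κ * (c e)⁻¹ ≤ x e ∧ x e ≤ (κ + σ) * (c e)⁻¹} = S := by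
    ext σ
    constructor
    · rintro ⟨hσ, hx⟩
      exact ⟨hσ, (main κ σ hσ).1 hx⟩
    · rintro ⟨hσ, hcond⟩
      exact ⟨hσ, (main κ σ hσ).2 hcond⟩
  refine ⟨?_, hmem⟩
  rw [sW, hset]
end

section
/- Let i, l be natural numbers with l ≥ 1 and let κ, σ, s : ℕ → ℝ be sequences such that for every t with i ≤ t ≤ i+l−1: σ(t) > 0, s(t) > 0, κ(t+1) = κ(t) − σ(t)/s(t), σ(t+1) ≤ (1/3)σ(t), and s(t+1) ≥ (2/3)s(t). Then for every j with i ≤ j ≤ i+l−1, κ(j+1) − κ(i+l) ≤ (1/2)(κ(j) − κ(i+l)). -/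
theorem stmt_14 (i l : ℕ) (hl : 1 ≤ l) (κ σ s : ℕ → ℝ)
    (hiter : ∀ t : ℕ, i ≤ t → t < i + l →
      0 < σ t ∧ 0 < s t ∧ κ (t + 1) = κ t - σ t / s t ∧
      σ (t + 1) ≤ (1 / 3) * σ t ∧ (2 / 3) * s t ≤ s (t + 1)) :
    ∀ j : ℕ, i ≤ j → j < i + l →
      κ (j + 1) - κ (i + l) ≤ (1 / 2) * (κ j - κ (i + l)) := by
  have key : ∀ k t : ℕ, i ≤ t → t + 1 + k = i + l →
      κ t - κ (i + l) ≤ 2 * (σ t / s t) := by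
    intro k
    induction k with
    | zero =>
      intro t ht heq
      obtain ⟨h1, h2, h3, _, _⟩ := hiter t ht (by omega)
      have : t + 1 = i + l := by omega
      rw [← this, h3]
      have : 0 < σ t / s t := div_pos h1 h2
      linarith
    | succ k ih =>
      intro t ht heq
      obtain ⟨h1, h2, h3, h4, h5⟩ := hiter t ht (by omega)
      have hk := ih (t + 1) (by omega) (by omega)
      have hs1 : 0 < s (t + 1) := lt_of_lt_of_le (by positivity) h5
      have hratio : σ (t + 1) / s (t + 1) ≤ (1 / 3) * σ t / ((2 / 3) * s t) :=
        div_le_div₀ (by positivity) h4 (by positivity) h5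
      have heq2 : (1 / 3) * σ t / ((2 / 3) * s t) = (1 / 2) * (σ t / s t) := by
        field_simp
      rw [heq2] at hratio
      rw [h3] at hk
      linarith
  intro j hj hjl
  obtain ⟨h1, h2, h3, h4, h5⟩ := hiter j hj hjl
  have hpos : 0 < σ j / s j := div_pos h1 h2
  by_cases hc : j + 1 = i + l
  · rw [← hc] at *
    rw [h3]
    linarith
  · have hk := key (i + l - (j + 1) - 1) (j + 1) (by omega) (by omega)
    have hs1 : 0 < s (j + 1) := lt_of_lt_of_le (by positivity) h5
    have hratio : σ (j + 1) / s (j + 1) ≤ (1 / 3) * σ j / ((2 / 3) * s j) :=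
      div_le_div₀ (by positivity) h4 (by positivity) h5
    have heq2 : (1 / 3) * σ j / ((2 / 3) * s j) = (1 / 2) * (σ j / s j) := by
      field_simp
    rw [heq2] at hratio
    rw [h3]
    linarith
end

section
/- Let i, l be natural numbers with l ≥ 2 and let κ, σ, s : ℕ → ℝ be sequences such that for every t with i ≤ t ≤ i+l−1: σ(t) > 0, s(t) > 0, κ(t+1) = κ(t) − σ(t)/s(t), σ(t+1) ≤ (1/3)σ(t), s(t+1) ≥ (2/3)s(t) and s(t+1) ≤ s(t); assume moreover σ(t) ≥ σ(i+l) ≥ 0 for all i ≤ t ≤ i+l. Define F(j) = σ(i+l) − ( σ(j) − (κ(j) − κ(i+l))·s(j) ). Then F(j) ≥ 2·F(j+2) for every j with i ≤ j ≤ i+l−2. -/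
private lemma geom_aux (i l : ℕ) (κ σ s : ℕ → ℝ)
    (hiter : ∀ t : ℕ, i ≤ t → t < i + l →
      0 < σ t ∧ 0 < s t ∧ κ (t + 1) = κ t - σ t / s t ∧
      σ (t + 1) ≤ (1 / 3) * σ t ∧ (2 / 3) * s t ≤ s (t + 1) ∧ s (t + 1) ≤ s t)
    (a : ℕ) (ha : i ≤ a) :
    ∀ n : ℕ, a + n ≤ i + l →
      σ (a + n) ≤ (1/3 : ℝ)^n * σ a ∧ (2/3 : ℝ)^n * s a ≤ s (a + n) ∧ s (a + n) ≤ s a := by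
  intro n
  induction n with
  | zero => intro _; simp
  | succ n ih =>
    intro hle
    have hle' : a + n ≤ i + l := by omega
    obtain ⟨h1, h2, h3⟩ := ih hle'
    have ht : a + n < i + l := by omega
    obtain ⟨hσ, hs, _, hσ', hs', hs''⟩ := hiter (a + n) (by omega) ht
    have e : a + (n+1) = (a + n) + 1 := by omega
    rw [e]
    refine ⟨?_, ?_, ?_⟩
    · calc σ (a + n + 1) ≤ (1/3) * σ (a + n) := hσ'
        _ ≤ (1/3) * ((1/3)^n * σ a) := by linarith
        _ = (1/3 : ℝ)^(n+1) * σ a := by ring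
    · calc (2/3 : ℝ)^(n+1) * s a = (2/3) * ((2/3)^n * s a) := by ring
        _ ≤ (2/3) * s (a + n) := by linarith
        _ ≤ s (a + n + 1) := hs'
    · linarith

private lemma slope_bound (i l : ℕ) (κ σ s : ℕ → ℝ)
    (hiter : ∀ t : ℕ, i ≤ t → t < i + l →
      0 < σ t ∧ 0 < s t ∧ κ (t + 1) = κ t - σ t / s t ∧
      σ (t + 1) ≤ (1 / 3) * σ t ∧ (2 / 3) * s t ≤ s (t + 1) ∧ s (t + 1) ≤ s t)
    (a : ℕ) (ha : i ≤ a) :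
    ∀ n : ℕ, a + n ≤ i + l →
      s a * (κ a - κ (a + n)) ≤ 2 * σ a * (1 - (1/2 : ℝ)^n) := by
  intro n
  induction n with
  | zero => intro _; simp
  | succ n ih =>
    intro hle
    have hle' : a + n ≤ i + l := by omega
    have ih' := ih hle'
    have ht : a + n < i + l := by omega
    obtain ⟨hσt, hst, hκ, _, _, _⟩ := hiter (a + n) (by omega) ht
    have hal : a < i + l := by omega
    obtain ⟨hσa, hsa, _, _, _, _⟩ := hiter a ha hal
    obtain ⟨g1, g2, _⟩ := geom_aux i l κ σ s hiter a ha n hle'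
    have e : a + (n+1) = (a + n) + 1 := by omega
    rw [e, hκ]
    have hp : (0:ℝ) < (2/3 : ℝ)^n * s a := by positivity
    -- bound σ(a+n)/s(a+n) ≤ (1/2)^n * σ a / s a
    have hdiv : σ (a + n) / s (a + n) ≤ ((1/3:ℝ)^n * σ a) / ((2/3:ℝ)^n * s a) := by
      exact div_le_div₀ (by positivity) g1 hp g2
    have hkey : s a * (σ (a + n) / s (a + n)) ≤ (1/2:ℝ)^n * σ a := by
      have heq : ((1/3:ℝ)^n * σ a) = (2/3:ℝ)^n * ((1/2:ℝ)^n * σ a) := by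
        rw [← mul_assoc, ← mul_pow]; norm_num
      rw [heq, mul_div_mul_left _ _ (pow_ne_zero n (by norm_num : (2/3:ℝ) ≠ 0))] at hdiv
      calc s a * (σ (a+n) / s (a+n)) ≤ s a * ((1/2:ℝ)^n * σ a / s a) := by
            exact mul_le_mul_of_nonneg_left hdiv (le_of_lt hsa)
        _ = (1/2:ℝ)^n * σ a := by field_simp
    have expand : s a * (κ a - (κ (a+n) - σ (a+n) / s (a+n)))
        = s a * (κ a - κ (a+n)) + s a * (σ (a+n) / s (a+n)) := by ring
    rw [expand]
    have hpow : ((1/2:ℝ)^(n+1)) = (1/2) * (1/2:ℝ)^n := by ring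
    nlinarith [ih', hkey]

private lemma kappa_nonneg (i l : ℕ) (κ σ s : ℕ → ℝ)
    (hiter : ∀ t : ℕ, i ≤ t → t < i + l →
      0 < σ t ∧ 0 < s t ∧ κ (t + 1) = κ t - σ t / s t ∧
      σ (t + 1) ≤ (1 / 3) * σ t ∧ (2 / 3) * s t ≤ s (t + 1) ∧ s (t + 1) ≤ s t)
    (a : ℕ) (ha : i ≤ a) :
    ∀ n : ℕ, a + n ≤ i + l → 0 ≤ κ a - κ (a + n) := by
  intro n
  induction n with
  | zero => intro _; simp
  | succ n ih =>
    intro hle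
    have ih' := ih (by omega)
    obtain ⟨hσt, hst, hκ, _⟩ := hiter (a + n) (by omega) (by omega)
    have e : a + (n+1) = (a + n) + 1 := by omega
    rw [e, hκ]
    have : 0 ≤ σ (a+n) / s (a+n) := le_of_lt (div_pos hσt hst)
    linarith

theorem stmt_15 (i l : ℕ) (hl : 2 ≤ l) (κ σ s : ℕ → ℝ)
    (hiter : ∀ t : ℕ, i ≤ t → t < i + l →
      0 < σ t ∧ 0 < s t ∧ κ (t + 1) = κ t - σ t / s t ∧
      σ (t + 1) ≤ (1 / 3) * σ t ∧ (2 / 3) * s t ≤ s (t + 1) ∧ s (t + 1) ≤ s t)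
    (hmono : ∀ t : ℕ, i ≤ t → t ≤ i + l → σ (i + l) ≤ σ t)
    (hlast : 0 ≤ σ (i + l)) :
    ∀ j : ℕ, i ≤ j → j + 2 ≤ i + l →
      2 * (σ (i + l) - (σ (j + 2) - (κ (j + 2) - κ (i + l)) * s (j + 2))) ≤
        σ (i + l) - (σ j - (κ j - κ (i + l)) * s j) := by
  intro j hj hj2
  -- basic facts
  obtain ⟨hσj, hsj, hκj, hσj', hsj', hsj''⟩ := hiter j hj (by omega)
  obtain ⟨hσj1, hsj1, hκj1, hσj1', hsj1', hsj1''⟩ := hiter (j+1) (by omega) (by omega)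
  have hsj2 : 0 < s (j+2) := lt_of_lt_of_le (by linarith) hsj1'
  have hsj2le : s (j+2) ≤ s j := le_trans hsj1'' hsj''
  -- κ j - κ (j+2) = σ j / s j + σ (j+1) / s (j+1)
  have hsplit : κ j - κ (j+2) = σ j / s j + σ (j+1) / s (j+1) := by
    rw [show j + 2 = (j+1)+1 by ring, hκj1, hκj]; ring
  -- B := κ (j+2) - κ (i+l)
  obtain ⟨n2, hn2⟩ : ∃ n, j + 2 + n = i + l := ⟨i + l - (j+2), by omega⟩
  have hB0 : 0 ≤ κ (j+2) - κ (i+l) := by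
    have := kappa_nonneg i l κ σ s hiter (j+2) (by omega) n2 (by omega)
    rwa [hn2] at this
  have hBbound : s (j+2) * (κ (j+2) - κ (i+l)) ≤ 2 * σ (j+2) := by
    have h := slope_bound i l κ σ s hiter (j+2) (by omega) n2 (by omega)
    rw [hn2] at h
    have hσ2 : 0 ≤ σ (j+2) := le_trans hlast (hmono (j+2) (by omega) hj2)
    have hp : (0:ℝ) ≤ (1/2:ℝ)^n2 := by positivity
    nlinarith
  -- s j * (κ j - κ (j+2)) ≥ σ j + σ (j+1)
  have hAB : σ j + σ (j+1) ≤ s j * (κ j - κ (j+2)) := by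
    rw [hsplit]
    have h1 : s j * (σ j / s j) = σ j := by field_simp
    have h2 : σ (j+1) ≤ s j * (σ (j+1) / s (j+1)) := by
      rw [mul_comm, div_mul_eq_mul_div, le_div_iff₀ hsj1]
      nlinarith
    nlinarith
  -- σ (j+1) ≥ σ (i+l)
  have hm1 : σ (i+l) ≤ σ (j+1) := hmono (j+1) (by omega) (by omega)
  -- combine: goal is linear in A := κ j - κ (i+l), B := κ (j+2) - κ (i+l)
  have hABsum : κ j - κ (i+l) = (κ j - κ (j+2)) + (κ (j+2) - κ (i+l)) := by ring
  rw [hABsum]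
  nlinarith [mul_le_mul_of_nonneg_right hsj2le hB0, hBbound, hAB, hm1]
end

section
/- Let G = (V,A) be a finite directed graph and b : 2^V → ℝ a set function. Let σ₁ ∈ ℝ and X₁ ⊆ V with δ(X₁) > 0 and b(X₁) + σ₁δ(X₁) < 0, and suppose X₁ minimizes Z ↦ b(Z) + σ₁δ(Z) over all subsets of V. Put σ₂ = −b(X₁)/δ(X₁). Then σ₂ > σ₁, and every set X₂ ⊆ V with b(X₂) + σ₂δ(X₂) < 0 satisfies δ(X₂) < δ(X₁). -/
open Finset

section NewtonStep

variable {ι : Type*} (b d : ι → ℝ)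

theorem lt_neg_div_of_add_mul_neg {σ : ℝ} {x : ι} (hd : 0 < d x) (hneg : b x + σ * d x < 0) :
    σ < -b x / d x := by
  rw [lt_div_iff₀ hd]
  linarith

/-- The lines `σ ↦ b z + σ * d z` all lie above the one of `x₁` at `σ₁`; one that is still
below zero at `σ₂ > σ₁`, where the line of `x₁` is not, must therefore have the smaller slope. -/
theorem lt_of_forall_add_mul_le {σ₁ σ₂ : ℝ} {x₁ x₂ : ι}
    (hmin : ∀ z, b x₁ + σ₁ * d x₁ ≤ b z + σ₁ * d z) (hσ : σ₁ < σ₂)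
    (hx₁ : 0 ≤ b x₁ + σ₂ * d x₁) (hx₂ : b x₂ + σ₂ * d x₂ < 0) : d x₂ < d x₁ := by
  by_contra! hle
  linarith [hmin x₂, mul_le_mul_of_nonneg_left hle (sub_pos.mpr hσ).le]

end NewtonStep

theorem stmt_16_general {V A : Type*} [Fintype A] [DecidableEq V]
    (t hd : A → V) (b : Finset V → ℝ) (σ₁ : ℝ) (X₁ : Finset V)
    (hδ : 0 < deltaC t hd X₁)
    (hneg : b X₁ + σ₁ * (deltaC t hd X₁ : ℝ) < 0)
    (hmin : ∀ Z : Finset V,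
      b X₁ + σ₁ * (deltaC t hd X₁ : ℝ) ≤ b Z + σ₁ * (deltaC t hd Z : ℝ)) :
    σ₁ < -(b X₁) / (deltaC t hd X₁ : ℝ) ∧
    ∀ X₂ : Finset V,
      b X₂ + (-(b X₁) / (deltaC t hd X₁ : ℝ)) * (deltaC t hd X₂ : ℝ) < 0 →
      deltaC t hd X₂ < deltaC t hd X₁ := by
  have hδ' : (0 : ℝ) < deltaC t hd X₁ := by exact_mod_cast hδ
  have hσ := lt_neg_div_of_add_mul_neg b (fun Z ↦ (deltaC t hd Z : ℝ)) hδ' hneg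
  refine ⟨hσ, fun X₂ hX₂ ↦ ?_⟩
  have hX₁ : 0 ≤ b X₁ + (-(b X₁) / (deltaC t hd X₁ : ℝ)) * (deltaC t hd X₁ : ℝ) := by
    rw [div_mul_cancel₀ _ hδ'.ne']
    linarith
  exact_mod_cast lt_of_forall_add_mul_le b (fun Z ↦ (deltaC t hd Z : ℝ)) hmin hσ hX₁ hX₂

theorem stmt_16 {V A : Type*} [Fintype V] [Fintype A] [DecidableEq V]
    (t hd : A → V) (b : Finset V → ℝ) (σ₁ : ℝ) (X₁ : Finset V)
    (hδ : 0 < deltaC t hd X₁)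
    (hneg : b X₁ + σ₁ * (deltaC t hd X₁ : ℝ) < 0)
    (hmin : ∀ Z : Finset V,
      b X₁ + σ₁ * (deltaC t hd X₁ : ℝ) ≤ b Z + σ₁ * (deltaC t hd Z : ℝ)) :
    σ₁ < -(b X₁) / (deltaC t hd X₁ : ℝ) ∧
    ∀ X₂ : Finset V,
      b X₂ + (-(b X₁) / (deltaC t hd X₁ : ℝ)) * (deltaC t hd X₂ : ℝ) < 0 →
      deltaC t hd X₂ < deltaC t hd X₁ :=
  stmt_16_general t hd b σ₁ X₁ hδ hneg hmin
end

section
/- Let G = (V,A) be a finite directed graph with A nonempty and let b : 2^V → ℤ be an integer-valued submodular function. Let κ ∈ ℤ, and assume there exists a submodular flow x and a real σ₀ ≥ 0 with κ ≤ x(e) ≤ κ + σ₀ for all e ∈ A. Define s(κ) as the minimum σ ≥ 0 such that some submodular flow x satisfies κ ≤ x(e) ≤ κ + σ for all e, and s_I(κ) as the minimum nonnegative integer σ such that some integral submodular flow x ∈ ℤ^A satisfies κ ≤ x(e) ≤ κ + σ for all e. Then s_I(κ) = ⌈s(κ)⌉. -/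
open Finset

/-!
The least real width `s` is attained by compactness, and an integral flow of width `n` is also a
real one, so `⌈s⌉` bounds the integral widths from below. Conversely, an optimal real flow lies in
the box `[κ, κ + ⌈s⌉]`, which therefore meets the submodular flow polytope, and Edmonds–Giles
integrality provides an integral flow in that box.

Integrality: every extreme point `x` of the compact polytope is integral. Otherwise the sets tight
for `x`, together with `∅` and `univ`, form a lattice of sets with integral net inflow. Contracting
each atom of this lattice to a single vertex gives a multigraph whose vertices all have integral net
inflow, so no vertex meets exactly one fractional edge. Counting shows that there are then more
fractional edges than independent balance conditions, which yields a nonzero circulation `y`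
supported on the fractional edges. It has zero net inflow into every tight set, so `x ± ε y` stays
feasible for small `ε`, and `x` is not extreme.
-/

open Filter Topology

section NetInflow

variable {W A : Type*} [Fintype A] [DecidableEq W] (t hd : A → W)

noncomputable def netInflow (S : Finset W) : (A → ℝ) →ₗ[ℝ] ℝ :=
  ∑ e with hd e ∈ S, LinearMap.proj e - ∑ e with t e ∈ S, LinearMap.proj e

lemma netInflow_apply (S : Finset W) (x : A → ℝ) :
    netInflow t hd S x = ∑ e with hd e ∈ S, x e - ∑ e with t e ∈ S, x e := by
  simp [netInflow, LinearMap.sum_apply]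

lemma rhoF_sub_deltaF (x : A → ℝ) (X : Finset W) :
    rhoF t hd x X - deltaF t hd x X = netInflow t hd X x := by
  rw [netInflow_apply, rhoF, deltaF, inEdges, outEdges,
    ← sum_filter_add_sum_filter_not (univ.filter (hd · ∈ X)) (t · ∈ X),
    ← sum_filter_add_sum_filter_not (univ.filter (t · ∈ X)) (hd · ∈ X)]
  simp only [filter_filter, and_comm]
  ring

lemma isSubmodularFlow_iff (b : Finset W → ℝ) (x : A → ℝ) :
    IsSubmodularFlow t hd b x ↔ ∀ X, netInflow t hd X x ≤ b X := by
  simp only [IsSubmodularFlow, rhoF_sub_deltaF]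

@[simp]
lemma netInflow_empty : netInflow t hd ∅ = 0 := by
  ext x; simp [netInflow_apply]

@[simp]
lemma netInflow_univ [Fintype W] : netInflow t hd univ = 0 := by
  ext x; simp [netInflow_apply]

lemma netInflow_union_add_inter (X Y : Finset W) (x : A → ℝ) :
    netInflow t hd (X ∪ Y) x + netInflow t hd (X ∩ Y) x =
      netInflow t hd X x + netInflow t hd Y x := by
  have key (f : A → W) : ∑ e with f e ∈ X ∪ Y, x e + ∑ e with f e ∈ X ∩ Y, x e =
      ∑ e with f e ∈ X, x e + ∑ e with f e ∈ Y, x e := by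
    simp only [sum_filter, ← sum_add_distrib]
    refine sum_congr rfl fun e _ => ?_
    by_cases hX : f e ∈ X <;> by_cases hY : f e ∈ Y <;> simp [hX, hY]
  simp only [netInflow_apply]
  linarith [key hd, key t]

lemma netInflow_sdiff {P Z : Finset W} (h : P ⊆ Z) (x : A → ℝ) :
    netInflow t hd (Z \ P) x = netInflow t hd Z x - netInflow t hd P x := by
  have := netInflow_union_add_inter t hd (Z \ P) P x
  rw [sdiff_union_of_subset h, sdiff_inter_self, netInflow_empty] at this
  simp only [LinearMap.zero_apply] at this
  linarith

lemma netInflow_compl [Fintype W] (S : Finset W) (x : A → ℝ) :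
    netInflow t hd Sᶜ x = -netInflow t hd S x := by
  have := netInflow_sdiff t hd (subset_univ S) x
  rw [← compl_eq_univ_sdiff] at this
  simpa using this

lemma netInflow_eq_sum_singleton (S : Finset W) (x : A → ℝ) :
    netInflow t hd S x = ∑ z ∈ S, netInflow t hd {z} x := by
  simp only [netInflow_apply, mem_singleton, sum_sub_distrib, sum_fiberwise_eq_sum_filter]

lemma netInflow_comp [Fintype W] {W' : Type*} [DecidableEq W'] (μ : W → W') (S : Finset W') :
    netInflow (μ ∘ t) (μ ∘ hd) S = netInflow t hd {v | μ v ∈ S} := by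
  ext x; simp [netInflow_apply]

end NetInflow

local notation "ℤᵣ" => AddMonoidHom.range (Int.castAddHom ℝ)

section Circulation

variable {α β : Type*} [Fintype α] [DecidableEq β] (t hd : α → β)

omit [DecidableEq β] in
lemma exists_ne_zero_forall_eq_zero {K ι : Type*} [Field K] [Fintype ι] (φ : ι → (α → K) →ₗ[K] K)
    (h : Fintype.card ι < Fintype.card α) : ∃ y ≠ 0, ∀ i, φ i y = 0 := by
  obtain ⟨y, hy, hy0⟩ := Submodule.exists_mem_ne_zero_of_ne_bot
    (LinearMap.ker_ne_bot_of_finrank_lt (f := LinearMap.pi φ) (by simpa using h))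
  exact ⟨y, hy0, fun i => congr_fun (LinearMap.mem_ker.1 hy) i⟩

omit [Fintype α] in
lemma card_touched_le_of_degree_ne_one (F : Finset α)
    (h : ∀ z, #{e ∈ F | hd e = z} + #{e ∈ F | t e = z} ≠ 1) :
    #(F.image hd ∪ F.image t) ≤ #F := by
  set J := F.image hd ∪ F.image t
  have hdeg : ∀ z ∈ J, 2 ≤ #{e ∈ F | hd e = z} + #{e ∈ F | t e = z} := by
    intro z hz
    have hpos : 0 < #{e ∈ F | hd e = z} + #{e ∈ F | t e = z} := by
      rcases mem_union.1 hz with hz | hz <;> obtain ⟨e, he, hez⟩ := mem_image.1 hz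
      · exact Nat.add_pos_left (card_pos.2 ⟨e, mem_filter.2 ⟨he, hez⟩⟩) _
      · exact Nat.add_pos_right _ (card_pos.2 ⟨e, mem_filter.2 ⟨he, hez⟩⟩)
    have := h z
    omega
  have hsum := sum_le_sum hdeg
  rw [sum_add_distrib,
    ← card_eq_sum_card_fiberwise fun e he => mem_union_left _ (mem_image_of_mem hd he),
    ← card_eq_sum_card_fiberwise fun e he => mem_union_right _ (mem_image_of_mem t he),
    sum_const, smul_eq_mul] at hsum
  omega

lemma exists_ne_zero_circulation [DecidableEq α] [Fintype β] (F : Finset α) (hF : F.Nonempty)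
    (h : ∀ z, #{e ∈ F | hd e = z} + #{e ∈ F | t e = z} ≠ 1) :
    ∃ y : α → ℝ, y ≠ 0 ∧ (∀ e ∉ F, y e = 0) ∧ ∀ S, netInflow t hd S y = 0 := by
  set J := F.image hd ∪ F.image t
  obtain ⟨e₀, he₀⟩ := hF
  have hz₀ : hd e₀ ∈ J := mem_union_left _ (mem_image_of_mem _ he₀)
  -- Balance at every touched vertex but one already forces balance at the last one.
  obtain ⟨y, hy0, hy⟩ := exists_ne_zero_forall_eq_zero
    (Sum.elim (fun e : ↥Fᶜ => LinearMap.proj (R := ℝ) (φ := fun _ : α => ℝ) e.1)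
      (fun z : ↥(J.erase (hd e₀)) => netInflow t hd {z.1}))
    (by
      have : #J ≤ #F := card_touched_le_of_degree_ne_one t hd F h
      have := card_le_univ F
      have := card_compl F
      have := card_pos.2 ⟨_, hz₀⟩
      simp only [Fintype.card_sum, Fintype.card_coe, card_erase_of_mem hz₀]
      omega)
  have hoff : ∀ e ∉ F, y e = 0 := fun e he => hy (.inl ⟨e, mem_compl.2 he⟩)
  have hsingle : ∀ z ≠ hd e₀, netInflow t hd {z} y = 0 := by
    intro z hz
    by_cases hzJ : z ∈ J
    · exact hy (.inr ⟨z, mem_erase.2 ⟨hz, hzJ⟩⟩)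
    · have hy_z : ∀ e, hd e = z ∨ t e = z → y e = 0 := by
        refine fun e he => hoff e fun heF => hzJ ?_
        rcases he with rfl | rfl
        exacts [mem_union_left _ (mem_image_of_mem _ heF),
          mem_union_right _ (mem_image_of_mem _ heF)]
      rw [netInflow_apply, sum_eq_zero, sum_eq_zero, sub_zero] <;>
        simp +contextual [hy_z]
  refine ⟨y, hy0, hoff, fun S => ?_⟩
  by_cases hS : hd e₀ ∈ S
  · rw [← neg_eq_zero, ← netInflow_compl, netInflow_eq_sum_singleton]
    exact sum_eq_zero fun z hz => hsingle z (by rintro rfl; exact mem_compl.1 hz hS)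
  · rw [netInflow_eq_sum_singleton]
    exact sum_eq_zero fun z hz => hsingle z (by rintro rfl; exact hS hz)

lemma degree_ne_one_of_netInflow_mem (w : α → ℝ) (hw : ∀ z, netInflow t hd {z} w ∈ ℤᵣ)
    (F : Finset α) (hF : ∀ e, e ∈ F ↔ w e ∉ ℤᵣ) (z : β) :
    #{e ∈ F | hd e = z} + #{e ∈ F | t e = z} ≠ 1 := by
  intro hone
  let q := QuotientAddGroup.mk' ℤᵣ
  have hq (p : α → Prop) [DecidablePred p] :
      q (∑ e with p e, w e) = ∑ e ∈ F with p e, q (w e) := by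
    rw [map_sum]
    refine (sum_subset (fun e => by simp +contextual) fun e he heF => ?_).symm
    simp only [mem_filter, mem_univ, true_and] at he heF
    rw [QuotientAddGroup.mk'_apply, QuotientAddGroup.eq_zero_iff]
    by_contra h
    exact heF ⟨(hF e).2 h, he⟩
  have hz := hw z
  rw [← QuotientAddGroup.eq_zero_iff, ← QuotientAddGroup.mk'_apply, netInflow_apply, map_sub,
    hq, hq] at hz
  simp only [mem_singleton] at hz
  have hfrac : ∀ e, e ∈ F → q (w e) ≠ 0 := fun e he => by
    rw [QuotientAddGroup.mk'_apply, Ne, QuotientAddGroup.eq_zero_iff]; exact (hF e).1 he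
  rcases (by omega : (#{e ∈ F | hd e = z} = 1 ∧ #{e ∈ F | t e = z} = 0) ∨
      (#{e ∈ F | hd e = z} = 0 ∧ #{e ∈ F | t e = z} = 1)) with ⟨h1, h0⟩ | ⟨h0, h1⟩ <;>
  · obtain ⟨e, he⟩ := card_eq_one.1 h1
    rw [card_eq_zero.1 h0, he] at hz
    exact hfrac e (mem_filter.1 (he ▸ mem_singleton_self e)).1 (by simpa using hz)

end Circulation

section SmallestContaining

variable {V : Type*} [Fintype V] [DecidableEq V] (T : Finset (Finset V))

def smallestContaining (v : V) : Finset V := {X ∈ T | v ∈ X}.inf id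

variable {T}

lemma mem_smallestContaining (v : V) : v ∈ smallestContaining T v := by
  rw [smallestContaining, mem_inf]
  exact fun X hX => (mem_filter.1 hX).2

lemma smallestContaining_subset_iff {X : Finset V} (hX : X ∈ T) (v : V) :
    smallestContaining T v ⊆ X ↔ v ∈ X :=
  ⟨fun h => h (mem_smallestContaining v), fun hv => inf_le (f := id) (mem_filter.2 ⟨hX, hv⟩)⟩

lemma smallestContaining_mem (hT : InfClosed (T : Set (Finset V))) (huniv : univ ∈ T) (v : V) :
    smallestContaining T v ∈ T :=
  hT.finsetInf_mem ⟨univ, mem_filter.2 ⟨huniv, mem_univ v⟩⟩ fun _ hX => (mem_filter.1 hX).1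

lemma filter_smallestContaining_eq_sdiff (hT : InfClosed (T : Set (Finset V))) (huniv : univ ∈ T)
    {Z : Finset V} (hZ : Z ∈ T) :
    ({v | smallestContaining T v = Z} : Finset V) = Z \ {X ∈ T | X ⊂ Z}.sup id := by
  ext v
  simp only [mem_filter, mem_univ, true_and, Finset.mem_sdiff, Finset.mem_sup, id]
  constructor
  · rintro rfl
    refine ⟨mem_smallestContaining v, fun ⟨X, hX, hvX⟩ => ?_⟩
    exact hX.2.not_subset ((smallestContaining_subset_iff hX.1 v).2 hvX)
  · rintro ⟨hvZ, hv⟩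
    refine (((smallestContaining_subset_iff hZ v).2 hvZ).eq_or_ssubset).resolve_right fun hlt => ?_
    exact hv ⟨_, ⟨smallestContaining_mem hT huniv v, hlt⟩, mem_smallestContaining v⟩

end SmallestContaining

lemma eventually_add_mul_le {a c d : ℝ} (h : a ≤ d) (hc : a = d → c = 0) :
    ∀ᶠ s in 𝓝 (0 : ℝ), a + s * c ≤ d := by
  rcases h.lt_or_eq with h | h
  · have : Tendsto (fun s => a + s * c) (𝓝 0) (𝓝 a) :=
      (by fun_prop : Continuous fun s : ℝ => a + s * c).tendsto' 0 a (by simp)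
    exact (this.eventually (eventually_lt_nhds h)).mono fun _ => le_of_lt
  · simp [hc h, h]

lemma notMem_extremePoints_of_eventually_add_smul_mem {E : Type*} [AddCommGroup E] [Module ℝ E]
    {P : Set E} {x y : E} (hy : y ≠ 0) (h : ∀ᶠ s in 𝓝 (0 : ℝ), x + s • y ∈ P) :
    x ∉ P.extremePoints ℝ := by
  intro hx
  obtain ⟨ε, hε, hball⟩ := Metric.eventually_nhds_iff.1 h
  have hsmall : ∀ s : ℝ, |s| = ε / 2 → x + s • y ∈ P := fun s hs =>
    hball (by rw [Real.dist_eq, sub_zero, hs]; linarith)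
  have hseg : x ∈ openSegment ℝ (x + (ε / 2) • y) (x + (-(ε / 2)) • y) :=
    ⟨1 / 2, 1 / 2, by norm_num, by norm_num, by norm_num, by module⟩
  have := (mem_extremePoints_iff_left.1 hx).2 _ (hsmall _ (abs_of_pos (by linarith)))
    _ (hsmall _ (by rw [abs_neg, abs_of_pos (by linarith)])) hseg
  exact hy ((smul_eq_zero.1 (add_eq_left.1 this)).resolve_left (by linarith))

section FlowPolytope

variable {V A : Type*} [Fintype A] [DecidableEq V] (t hd : A → V)
  (b : Finset V → ℤ) (l u : A → ℤ)

lemma isClosed_setOf_isSubmodularFlow (b : Finset V → ℝ) :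
    IsClosed {x | IsSubmodularFlow t hd b x} := by
  simp only [isSubmodularFlow_iff, Set.ofPred_forall]
  exact isClosed_iInter fun X =>
    isClosed_le (LinearMap.continuous_of_finiteDimensional _) continuous_const

def flowPolytope : Set (A → ℝ) :=
  {x | IsSubmodularFlow t hd (fun X => b X) x ∧ ∀ e, (l e : ℝ) ≤ x e ∧ x e ≤ u e}

lemma isCompact_flowPolytope : IsCompact (flowPolytope t hd b l u) := by
  refine (isCompact_univ_pi fun e => isCompact_Icc (a := (l e : ℝ)) (b := u e)).of_isClosed_subset
    ?_ fun x hx => Set.mem_univ_pi.2 fun e => hx.2 e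
  simp only [flowPolytope, Set.ofPred_and, Set.ofPred_forall]
  exact (isClosed_setOf_isSubmodularFlow t hd _).inter <| isClosed_iInter fun e =>
    (isClosed_le continuous_const (continuous_apply e)).inter
      (isClosed_le (continuous_apply e) continuous_const)

lemma eventually_add_smul_mem_flowPolytope [Fintype V] {x y : A → ℝ} (hx : x ∈ flowPolytope t hd b l u)
    (htight : ∀ X, netInflow t hd X x = b X → netInflow t hd X y = 0)
    (hbox : ∀ e, x e = l e ∨ x e = u e → y e = 0) :
    ∀ᶠ s in 𝓝 (0 : ℝ), x + s • y ∈ flowPolytope t hd b l u := by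
  obtain ⟨hflow, hxbox⟩ := hx
  rw [isSubmodularFlow_iff] at hflow
  simp only [flowPolytope, isSubmodularFlow_iff, map_add, map_smul, Pi.add_apply, Pi.smul_apply,
    smul_eq_mul, Set.mem_ofPred_eq, eventually_and, eventually_all]
  refine ⟨fun X => eventually_add_mul_le (hflow X) (htight X), fun e => ⟨?_, ?_⟩⟩
  · refine (eventually_add_mul_le (c := -y e) (neg_le_neg (hxbox e).1) fun h => ?_).mono
      fun s hs => ?_
    · rw [hbox e (.inl (neg_inj.1 h)), neg_zero]
    · linarith
  · exact eventually_add_mul_le (hxbox e).2 fun h => hbox e (.inr h)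

end FlowPolytope

section Integrality

variable {V A : Type*} [Fintype V] [Fintype A] [DecidableEq V] (t hd : A → V)
  (b : Finset V → ℤ) (l u : A → ℤ)

noncomputable def tightSets (x : A → ℝ) : Finset (Finset V) :=
  {X | X = ∅ ∨ X = univ ∨ netInflow t hd X x = b X}

variable {t hd b}

lemma isSublattice_tightSets (hb : Submodular fun X => (b X : ℝ)) {x : A → ℝ}
    (hx : IsSubmodularFlow t hd (fun X => b X) x) :
    IsSublattice (tightSets t hd b x : Set (Finset V)) := by
  rw [isSubmodularFlow_iff] at hx
  have hunion_inter {X Y : Finset V} (hX : netInflow t hd X x = b X)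
      (hY : netInflow t hd Y x = b Y) :
      netInflow t hd (X ∪ Y) x = b (X ∪ Y) ∧ netInflow t hd (X ∩ Y) x = b (X ∩ Y) := by
    have := netInflow_union_add_inter t hd X Y x
    have := hb X Y
    have := hx (X ∪ Y)
    have := hx (X ∩ Y)
    constructor <;> linarith
  constructor <;> intro X hX Y hY <;>
    simp only [tightSets, coe_filter, mem_univ, true_and, Set.mem_ofPred_eq, sup_eq_union,
      inf_eq_inter] at hX hY ⊢ <;>
    rcases hX with rfl | rfl | hX <;> rcases hY with rfl | rfl | hY <;> simp_all

lemma netInflow_mem_of_mem_tightSets {x : A → ℝ} {X : Finset V} (hX : X ∈ tightSets t hd b x) :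
    netInflow t hd X x ∈ ℤᵣ := by
  simp only [tightSets, mem_filter, mem_univ, true_and] at hX
  rcases hX with rfl | rfl | hX
  · simp
  · simp
  · exact hX ▸ ⟨b X, rfl⟩

theorem mem_range_intCast_of_mem_extremePoints (hb : Submodular fun X => (b X : ℝ)) {x : A → ℝ}
    (hx : x ∈ (flowPolytope t hd b l u).extremePoints ℝ) (e : A) : x e ∈ ℤᵣ := by
  classical
  by_contra he
  have hxP := extremePoints_subset hx
  set T := tightSets t hd b x
  have hT := isSublattice_tightSets hb hxP.1
  have huniv : univ ∈ T := by simp [T, tightSets]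
  set μ := smallestContaining T
  -- Contract each class `{v | μ v = Z}` to a single vertex `Z`.
  have hvertex (Z : Finset V) : netInflow (μ ∘ t) (μ ∘ hd) {Z} x ∈ ℤᵣ := by
    simp only [netInflow_comp, mem_singleton]
    by_cases hZ : Z ∈ T
    · have hP : {X ∈ T | X ⊂ Z}.sup id ∈ T :=
        sup_induction (by simp [T, tightSets]) (fun _ h₁ _ h₂ => hT.supClosed h₁ h₂)
          fun X hX => (mem_filter.1 hX).1
      rw [filter_smallestContaining_eq_sdiff hT.infClosed huniv hZ,
        netInflow_sdiff _ _ (Finset.sup_le fun X hX => (mem_filter.1 hX).2.subset)]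
      exact sub_mem (netInflow_mem_of_mem_tightSets hZ) (netInflow_mem_of_mem_tightSets hP)
    · rw [show ({v | μ v = Z} : Finset V) = ∅ from filter_eq_empty_iff.2 fun v _ h =>
        hZ (h ▸ smallestContaining_mem hT.infClosed huniv v)]
      simp
  obtain ⟨y, hy0, hyF, hy⟩ := exists_ne_zero_circulation (μ ∘ t) (μ ∘ hd) {e | x e ∉ ℤᵣ}
    ⟨e, by simpa using he⟩ (degree_ne_one_of_netInflow_mem _ _ x hvertex _ (by simp))
  refine notMem_extremePoints_of_eventually_add_smul_mem hy0
    (eventually_add_smul_mem_flowPolytope t hd b l u hxP (fun X hX => ?_) fun e' he' => ?_) hx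
  · have hXT : X ∈ T := by simp [T, tightSets, hX]
    rw [← hy {Z | Z ⊆ X}, netInflow_comp]
    congr 2
    ext v
    simpa using (smallestContaining_subset_iff hXT v).symm
  · refine hyF e' ?_
    simp only [mem_filter, mem_univ, true_and, not_not]
    rcases he' with h | h <;> exact h ▸ ⟨_, rfl⟩

theorem exists_int_submodularFlow (hb : Submodular fun X => (b X : ℝ))
    (h : ∃ x, IsSubmodularFlow t hd (fun X => b X) x ∧ ∀ e, (l e : ℝ) ≤ x e ∧ x e ≤ u e) :
    ∃ z : A → ℤ, IsSubmodularFlow t hd (fun X => b X) (fun e => z e) ∧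
      ∀ e, l e ≤ z e ∧ z e ≤ u e := by
  obtain ⟨x, hx⟩ := (isCompact_flowPolytope t hd b l u).extremePoints_nonempty h
  choose z hz using mem_range_intCast_of_mem_extremePoints l u hb hx
  have hzx : (fun e => (z e : ℝ)) = x := funext hz
  obtain ⟨hflow, hbox⟩ := extremePoints_subset hx
  rw [← hzx] at hflow hbox
  exact ⟨z, hflow, fun e => by simpa using hbox e⟩

end Integrality

section Widths

variable {V A : Type*} [Fintype A] [DecidableEq V] (t hd : A → V)
  (b : Finset V → ℤ) (κ : ℤ)

def widths : Set ℝ :=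
  {σ | 0 ≤ σ ∧ ∃ x : A → ℝ, IsSubmodularFlow t hd (fun X => b X) x ∧
    ∀ e, (κ : ℝ) ≤ x e ∧ x e ≤ κ + σ}

def intWidths : Set ℕ :=
  {σ | ∃ x : A → ℤ, (∀ X, ∑ e ∈ inEdges t hd X, x e - ∑ e ∈ outEdges t hd X, x e ≤ b X) ∧
    ∀ e, κ ≤ x e ∧ x e ≤ κ + σ}

lemma isSubmodularFlow_intCast_iff (z : A → ℤ) :
    IsSubmodularFlow t hd (fun X => b X) (fun e => z e) ↔
      ∀ X, ∑ e ∈ inEdges t hd X, z e - ∑ e ∈ outEdges t hd X, z e ≤ b X := by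
  simp only [IsSubmodularFlow, rhoF, deltaF, ← Int.cast_sum, ← Int.cast_sub, Int.cast_le]

lemma exists_isLeast_widths
    (hfeas : ∃ (x : A → ℝ) (σ₀ : ℝ), 0 ≤ σ₀ ∧ IsSubmodularFlow t hd (fun X => b X) x ∧
      ∀ e, (κ : ℝ) ≤ x e ∧ x e ≤ κ + σ₀) :
    ∃ s, IsLeast (widths t hd b κ) s := by
  obtain ⟨x₀, σ₀, hσ₀, hx₀, hx₀κ⟩ := hfeas
  -- Widths above `σ₀` are irrelevant, and the remaining pairs `(x, σ)` form a compact set.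
  let K : Set ((A → ℝ) × ℝ) := {p | p.2 ∈ Set.Icc 0 σ₀ ∧
    IsSubmodularFlow t hd (fun X => b X) p.1 ∧ ∀ e, (κ : ℝ) ≤ p.1 e ∧ p.1 e ≤ κ + p.2}
  have hK : IsCompact K := by
    refine ((isCompact_univ_pi fun _ => isCompact_Icc (a := (κ : ℝ)) (b := κ + σ₀)).prod
      isCompact_Icc).of_isClosed_subset ?_ fun p hp => ⟨Set.mem_univ_pi.2 fun e =>
        ⟨(hp.2.2 e).1, (hp.2.2 e).2.trans (by linarith [hp.1.2])⟩, hp.1⟩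
    simp only [K, Set.ofPred_and, Set.ofPred_forall]
    refine (isClosed_Icc.preimage continuous_snd).inter
      (((isClosed_setOf_isSubmodularFlow t hd _).preimage continuous_fst).inter
        (isClosed_iInter fun e => ?_))
    exact (isClosed_le continuous_const (by fun_prop)).inter
      (isClosed_le (by fun_prop) (by fun_prop))
  obtain ⟨⟨x, s⟩, hsK, hmin⟩ :=
    hK.exists_isMinOn ⟨(x₀, σ₀), ⟨hσ₀, le_rfl⟩, hx₀, hx₀κ⟩ continuous_snd.continuousOn
  refine ⟨s, ⟨hsK.1.1, x, hsK.2⟩, fun σ ⟨hσ, y, hy⟩ => ?_⟩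
  by_cases h : σ ≤ σ₀
  · exact hmin (show (y, σ) ∈ K from ⟨⟨hσ, h⟩, hy⟩)
  · linarith [hsK.1.2]

lemma isLeast_intWidths [Fintype V] (hb : Submodular fun X => (b X : ℝ)) {s : ℝ}
    (hs : IsLeast (widths t hd b κ) s) : IsLeast (intWidths t hd b κ) ⌈s⌉.toNat := by
  have hceil : 0 ≤ ⌈s⌉ := Int.ceil_nonneg hs.1.1
  constructor
  · obtain ⟨-, x, hx, hxκ⟩ := hs.1
    obtain ⟨z, hz, hzκ⟩ := exists_int_submodularFlow (fun _ => κ) (fun _ => κ + ⌈s⌉) hb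
      ⟨x, hx, fun e => ⟨(hxκ e).1, by push_cast; linarith [(hxκ e).2, Int.le_ceil s]⟩⟩
    exact ⟨z, (isSubmodularFlow_intCast_iff t hd b z).1 hz, by simpa [hceil] using hzκ⟩
  · rintro n ⟨z, hz, hzκ⟩
    have : s ≤ n := hs.2 ⟨n.cast_nonneg, _, (isSubmodularFlow_intCast_iff t hd b z).2 hz,
      fun e => by exact_mod_cast hzκ e⟩
    have := Int.ceil_le.2 (show s ≤ ((n : ℤ) : ℝ) by exact_mod_cast this)
    omega

end Widths

theorem stmt_17_general {V A : Type*} [Fintype V] [Fintype A] [DecidableEq V]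
    (t hd : A → V) (b : Finset V → ℤ)
    (hb : ∀ X Y : Finset V, b (X ∪ Y) + b (X ∩ Y) ≤ b X + b Y) (κ : ℤ)
    (hfeas : ∃ (x : A → ℝ) (σ₀ : ℝ), 0 ≤ σ₀ ∧
      IsSubmodularFlow t hd (fun X => (b X : ℝ)) x ∧
      ∀ e : A, (κ : ℝ) ≤ x e ∧ x e ≤ (κ : ℝ) + σ₀) :
    ((sInf {σ : ℕ | ∃ x : A → ℤ,
        (∀ X : Finset V,
          (∑ e ∈ inEdges t hd X, x e) - (∑ e ∈ outEdges t hd X, x e) ≤ b X) ∧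
        ∀ e : A, κ ≤ x e ∧ x e ≤ κ + (σ : ℤ)} : ℕ) : ℤ) =
      ⌈sInf {σ : ℝ | 0 ≤ σ ∧ ∃ x : A → ℝ,
        IsSubmodularFlow t hd (fun X => (b X : ℝ)) x ∧
        ∀ e : A, (κ : ℝ) ≤ x e ∧ x e ≤ (κ : ℝ) + σ}⌉ := by
  change ((sInf (intWidths t hd b κ) : ℕ) : ℤ) = ⌈sInf (widths t hd b κ)⌉
  obtain ⟨s, hs⟩ := exists_isLeast_widths t hd b κ hfeas
  have hb' : Submodular fun X => (b X : ℝ) := fun X Y => by dsimp only; exact_mod_cast hb X Y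
  rw [hs.csInf_eq, (isLeast_intWidths t hd b κ hb' hs).csInf_eq,
    Int.toNat_of_nonneg (Int.ceil_nonneg hs.1.1)]

theorem stmt_17 {V A : Type*} [Fintype V] [Fintype A] [DecidableEq V] [Nonempty A]
    (t hd : A → V) (b : Finset V → ℤ)
    (hb : ∀ X Y : Finset V, b (X ∪ Y) + b (X ∩ Y) ≤ b X + b Y) (κ : ℤ)
    (hfeas : ∃ (x : A → ℝ) (σ₀ : ℝ), 0 ≤ σ₀ ∧
      IsSubmodularFlow t hd (fun X => (b X : ℝ)) x ∧
      ∀ e : A, (κ : ℝ) ≤ x e ∧ x e ≤ (κ : ℝ) + σ₀) :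
    ((sInf {σ : ℕ | ∃ x : A → ℤ,
        (∀ X : Finset V,
          (∑ e ∈ inEdges t hd X, x e) - (∑ e ∈ outEdges t hd X, x e) ≤ b X) ∧
        ∀ e : A, κ ≤ x e ∧ x e ≤ κ + (σ : ℤ)} : ℕ) : ℤ) =
      ⌈sInf {σ : ℝ | 0 ≤ σ ∧ ∃ x : A → ℝ,
        IsSubmodularFlow t hd (fun X => (b X : ℝ)) x ∧
        ∀ e : A, (κ : ℝ) ≤ x e ∧ x e ≤ (κ : ℝ) + σ}⌉ :=
  stmt_17_general t hd b hb κ hfeas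
end
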